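/- arXiv:2004.10367 — 5 statements merged into one kernel-verified Lean document; each statement's English description precedes it below -/
import Mathlib

section
/- Let t be a positive integer and let G be a graph with n = v(G) ≥ 9t vertices. Let q = 1 − e(G)/(n choose 2) and l = ⌊n/(9t)⌋. If 6t·(70q)^{l²} ≤ 1, then G has a K_t minor. -/
/-!
Let `q` be the density of non-edges. At least three quarters of the vertices have degree at most
`4qn` in the complement; call this set `W`. Branch sets of size `l + 1` are grown inside the
unused part of `W` one vertex at a time, each new vertex adjacent to the set built so far. The
blind spot of a set `B` consists of the unused vertices with no neighbour in `B`. Averaging over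
the candidate vertices shows that some candidate is non-adjacent to at most a `70q`-fraction of the
current blind spot and lies in at most a `(70q)^(l+1)`-fraction of the blind spots of earlier
branch sets that still contain the current set. So a finished branch set has a blind spot of size
at most `4qn(70q)^l`, and it lies in at most `t(70q)^(l(l+1)) < 1` blind spots of earlier branch
sets, i.e. it is joined by an edge to each of them.
-/

open Real

/-- `G.HasMinor H` means `H` is a minor of `G`, witnessed by a model: a family of
pairwise disjoint connected branch sets in `G` indexed by the vertices of `H`, with an
edge of `G` between the branch sets of any two adjacent vertices of `H`. -/
def SimpleGraph.HasMinor {V W : Type*} (G : SimpleGraph V) (H : SimpleGraph W) : Prop :=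
  ∃ X : W → Set V,
    (∀ w, (G.induce (X w)).Connected) ∧
    (Pairwise fun w₁ w₂ => Disjoint (X w₁) (X w₂)) ∧
    ∀ ⦃w₁ w₂⦄, H.Adj w₁ w₂ → ∃ u ∈ X w₁, ∃ v ∈ X w₂, G.Adj u v

open Finset

theorem Finset.mul_card_filter_sum_lt_le {ι : Type*} (s : Finset ι) {f : ι → ℝ}
    (hf : ∀ i ∈ s, 0 ≤ f i) (c : ℝ) :
    c * #{i ∈ s | c * ∑ j ∈ s, f j < #s * f i} ≤ #s := by
  set F := {i ∈ s | c * ∑ j ∈ s, f j < #s * f i}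
  obtain hF | ⟨i, hi⟩ := F.eq_empty_or_nonempty
  · simp [hF]
  obtain hc | hc := lt_or_ge c 0
  · nlinarith [Nat.cast_nonneg (α := ℝ) #F, Nat.cast_nonneg (α := ℝ) #s]
  have hF_sum : ∑ j ∈ F, f j ≤ ∑ j ∈ s, f j :=
    sum_le_sum_of_subset_of_nonneg (filter_subset _ _) fun j hj _ => hf j hj
  have hlt : #F * (c * ∑ j ∈ s, f j) < #s * ∑ j ∈ s, f j := by
    calc (#F : ℝ) * (c * ∑ j ∈ s, f j) = ∑ j ∈ F, c * ∑ j ∈ s, f j := by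
          rw [sum_const, nsmul_eq_mul]
      _ < ∑ j ∈ F, #s * f j := sum_lt_sum_of_nonempty ⟨i, hi⟩ fun j hj => (mem_filter.1 hj).2
      _ ≤ #s * ∑ j ∈ s, f j := by rw [← mul_sum]; gcongr
  have hpos : 0 < ∑ j ∈ s, f j := by
    refine (sum_nonneg hf).lt_of_ne fun h => ?_
    simp [← h] at hlt
  nlinarith

theorem Finset.exists_mem_mul_le_three_mul_sum {ι : Type*} {s : Finset ι} (hs : s.Nonempty)
    {f g : ι → ℝ} (hf : ∀ i ∈ s, 0 ≤ f i) (hg : ∀ i ∈ s, 0 ≤ g i) :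
    ∃ i ∈ s, #s * f i ≤ 3 * ∑ j ∈ s, f j ∧ #s * g i ≤ 3 * ∑ j ∈ s, g j := by
  classical
  set F := {i ∈ s | 3 * ∑ j ∈ s, f j < #s * f i}
  set G := {i ∈ s | 3 * ∑ j ∈ s, g j < #s * g i}
  have hcard : #(F ∪ G) < #s := by
    have hF := s.mul_card_filter_sum_lt_le hf 3
    have hG := s.mul_card_filter_sum_lt_le hg 3
    have hs' : (0 : ℝ) < #s := by exact_mod_cast hs.card_pos
    have : (#(F ∪ G) : ℝ) < #s := by
      calc (#(F ∪ G) : ℝ) ≤ #F + #G := by exact_mod_cast card_union_le F G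
        _ < #s := by linarith
    exact_mod_cast this
  obtain ⟨i, hi, hiFG⟩ := exists_mem_notMem_of_card_lt_card hcard
  simp only [mem_union, F, G, mem_filter, not_or, not_and, not_lt] at hiFG
  exact ⟨i, hi, hiFG.1 hi, hiFG.2 hi⟩

namespace SimpleGraph

variable {V : Type*}

theorem Connected.induce_insert {G : SimpleGraph V} {B : Set V} (hB : (G.induce B).Connected)
    {v w : V} (hw : w ∈ B) (hvw : G.Adj v w) : (G.induce (insert v B)).Connected := by
  have hv : (G.induce {v}).Preconnected := by
    rw [induce_singleton_eq_top]
    exact fun a b => (Subsingleton.elim a b) ▸ Reachable.refl a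
  simpa [Set.singleton_union] using connected_induce_union hv hB.preconnected rfl hw hvw

def Touching (G : SimpleGraph V) (B₁ B₂ : Finset V) : Prop :=
  Disjoint B₁ B₂ ∧ ∃ u ∈ B₁, ∃ v ∈ B₂, G.Adj u v

theorem Touching.symm {G : SimpleGraph V} {B₁ B₂ : Finset V} (h : G.Touching B₁ B₂) :
    G.Touching B₂ B₁ :=
  let ⟨hdisj, u, hu, v, hv, huv⟩ := h
  ⟨hdisj.symm, v, hv, u, hu, huv.symm⟩

theorem Touching.ne {G : SimpleGraph V} {B₁ B₂ : Finset V} (h : G.Touching B₁ B₂) : B₁ ≠ B₂ := by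
  rintro rfl
  obtain ⟨hdisj, u, hu, -⟩ := h
  simp [(Finset.disjoint_self_iff_empty _).1 hdisj] at hu

theorem hasMinor_top_of_pairwise_touching (G : SimpleGraph V) {W : Type*} [Fintype W]
    {𝓑 : Finset (Finset V)} (hcard : #𝓑 = Fintype.card W)
    (hconn : ∀ B ∈ 𝓑, (G.induce (B : Set V)).Connected)
    (htouch : (𝓑 : Set (Finset V)).Pairwise G.Touching) : G.HasMinor (⊤ : SimpleGraph W) := by
  let e : W ≃ 𝓑 := Fintype.equivOfCardEq (by rw [Fintype.card_coe, hcard])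
  have he : Pairwise fun w₁ w₂ => G.Touching (e w₁) (e w₂) := fun w₁ w₂ hne =>
    htouch (e w₁).2 (e w₂).2 (Subtype.coe_injective.ne (e.injective.ne hne))
  refine ⟨fun w => ((e w : Finset V) : Set V), fun w => hconn _ (e w).2,
    fun w₁ w₂ hne => Finset.disjoint_coe.2 (he hne).1, fun w₁ w₂ hadj => ?_⟩
  obtain ⟨-, u, hu, v, hv, huv⟩ := he hadj.ne
  exact ⟨u, hu, v, hv, huv⟩

section BlindSpot

variable [DecidableEq V] (G : SimpleGraph V) [DecidableRel G.Adj]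

-- `Gᶜ.Adj u w` also forces `u ≠ w`, so the blind spot of `B` is disjoint from `B`.
def blindSpot (A B : Finset V) : Finset V := {u ∈ A | ∀ w ∈ B, Gᶜ.Adj u w}

def boundaryIn (A B : Finset V) : Finset V := {u ∈ A \ B | ∃ w ∈ B, G.Adj u w}

theorem blindSpot_subset (A B : Finset V) : G.blindSpot A B ⊆ A :=
  filter_subset _ _

theorem blindSpot_mono {A A' : Finset V} (h : A ⊆ A') (B : Finset V) :
    G.blindSpot A B ⊆ G.blindSpot A' B :=
  filter_subset_filter _ h

theorem blindSpot_insert (A B : Finset V) (v : V) :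
    G.blindSpot A (insert v B) = {u ∈ G.blindSpot A B | Gᶜ.Adj u v} := by
  ext u
  simp only [blindSpot, mem_filter, forall_mem_insert]
  tauto

theorem card_sdiff_le_card_boundaryIn_add (A B : Finset V) :
    #(A \ B) ≤ #(G.boundaryIn A B) + #(G.blindSpot A B) := by
  refine (card_le_card fun u hu => ?_).trans (card_union_le _ _)
  simp only [blindSpot, boundaryIn, mem_union, mem_filter, compl_adj] at hu ⊢
  obtain ⟨huA, huB⟩ := mem_sdiff.1 hu
  by_cases h : ∃ w ∈ B, G.Adj u w
  · exact .inl ⟨hu, h⟩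
  · push Not at h
    exact .inr ⟨huA, fun w hw => ⟨fun huw => huB (huw ▸ hw), h w hw⟩⟩

theorem touching_of_not_subset_blindSpot {A B B' : Finset V} (hB' : B' ⊆ A) (hAB : Disjoint A B)
    (h : ¬B' ⊆ G.blindSpot A B) : G.Touching B' B := by
  refine ⟨disjoint_of_subset_left hB' hAB, ?_⟩
  obtain ⟨u, hu, hub⟩ := not_subset.1 h
  simp only [blindSpot, mem_filter, compl_adj, not_and, not_forall] at hub
  obtain ⟨w, hw, hne⟩ := hub (hB' hu)
  exact ⟨u, hu, w, hw, not_not.1 (hne fun huw => Finset.disjoint_left.1 hAB (hB' hu) (huw ▸ hw))⟩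

variable [Fintype V]

theorem card_blindSpot_singleton_le (A : Finset V) (v : V) :
    #(G.blindSpot A {v}) ≤ Gᶜ.degree v := by
  rw [← card_neighborFinset_eq_degree]
  refine card_le_card fun u hu => ?_
  simp only [blindSpot, mem_filter, mem_singleton, forall_eq] at hu
  exact (mem_neighborFinset _ _ _).2 hu.2.symm

theorem sum_card_compl_adj_le {S C : Finset V} {d : ℝ}
    (hdeg : ∀ u ∈ S, (Gᶜ.degree u : ℝ) ≤ d) :
    ∑ v ∈ C, (#{u ∈ S | Gᶜ.Adj u v} : ℝ) ≤ #S * d := by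
  calc ∑ v ∈ C, (#{u ∈ S | Gᶜ.Adj u v} : ℝ) = ∑ u ∈ S, (#{v ∈ C | Gᶜ.Adj u v} : ℝ) := by
        exact_mod_cast sum_card_bipartiteAbove_eq_sum_card_bipartiteBelow fun v u => Gᶜ.Adj u v
    _ ≤ ∑ _u ∈ S, d := sum_le_sum fun u hu => le_trans ?_ (hdeg u hu)
    _ = #S * d := by rw [sum_const, nsmul_eq_mul]
  rw [← card_neighborFinset_eq_degree]
  exact_mod_cast card_le_card fun v hv => (mem_neighborFinset _ _ _).2 (mem_filter.1 hv).2

/-- Double counting bounds the average, over the boundary, of the number of non-neighbours of `v`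
in the blind spot by `d * #blindSpot / #boundary`, and of the number of `Y j ⊇ B` containing `v` by
`d * ρ * #{j | B ⊆ Y j} / #boundary`; at most a third of the boundary exceeds three times either
average. -/
theorem exists_mem_boundaryIn_card_blindSpot_insert_le {A B : Finset V} {d r ρ : ℝ}
    (hdeg : ∀ u ∈ A, (Gᶜ.degree u : ℝ) ≤ d) (hC : (G.boundaryIn A B).Nonempty)
    (hroom : 3 * d ≤ r * #(G.boundaryIn A B)) (hρ : 0 ≤ ρ)
    {ι : Type*} (s : Finset ι) (Y : ι → Finset V) (hY : ∀ j ∈ s, (#(Y j) : ℝ) ≤ d * ρ) :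
    ∃ v ∈ G.boundaryIn A B,
      (#(G.blindSpot A (insert v B)) : ℝ) ≤ r * #(G.blindSpot A B) ∧
      (#{j ∈ s | insert v B ⊆ Y j} : ℝ) ≤ r * ρ * #{j ∈ s | B ⊆ Y j} := by
  set C := G.boundaryIn A B
  set S := G.blindSpot A B
  set J := {j ∈ s | B ⊆ Y j}
  have hS : ∑ v ∈ C, (#{u ∈ S | Gᶜ.Adj u v} : ℝ) ≤ #S * d :=
    G.sum_card_compl_adj_le fun u hu => hdeg u (G.blindSpot_subset A B hu)
  have hJ : ∑ v ∈ C, (#{j ∈ J | v ∈ Y j} : ℝ) ≤ #J * (d * ρ) := by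
    calc ∑ v ∈ C, (#{j ∈ J | v ∈ Y j} : ℝ) = ∑ j ∈ J, (#{v ∈ C | v ∈ Y j} : ℝ) := by
          exact_mod_cast sum_card_bipartiteAbove_eq_sum_card_bipartiteBelow fun v j => v ∈ Y j
      _ ≤ ∑ _j ∈ J, d * ρ := sum_le_sum fun j hj =>
          le_trans (by exact_mod_cast card_le_card fun v hv => (mem_filter.1 hv).2)
            (hY j (mem_filter.1 hj).1)
      _ = #J * (d * ρ) := by rw [sum_const, nsmul_eq_mul]
  obtain ⟨v, hv, hvS, hvJ⟩ := exists_mem_mul_le_three_mul_sum hC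
    (f := fun v => (#{u ∈ S | Gᶜ.Adj u v} : ℝ)) (g := fun v => (#{j ∈ J | v ∈ Y j} : ℝ))
    (fun _ _ => by positivity) (fun _ _ => by positivity)
  have hCpos : (0 : ℝ) < #C := by exact_mod_cast hC.card_pos
  have hJ_insert : {j ∈ s | insert v B ⊆ Y j} = {j ∈ J | v ∈ Y j} := by
    ext j
    simp only [J, mem_filter, insert_subset_iff]
    tauto
  refine ⟨v, hv, ?_, ?_⟩
  · rw [blindSpot_insert]
    refine le_of_mul_le_mul_left ?_ hCpos
    nlinarith [mul_le_mul_of_nonneg_left hroom (Nat.cast_nonneg (α := ℝ) #S)]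
  · rw [hJ_insert]
    refine le_of_mul_le_mul_left ?_ hCpos
    nlinarith [mul_le_mul_of_nonneg_left hroom (mul_nonneg hρ (Nat.cast_nonneg (α := ℝ) #J))]

theorem exists_connected_card_blindSpot_le {A : Finset V} {d r : ℝ} {m : ℕ} (hd : 0 ≤ d)
    (hr₀ : 0 ≤ r) (hr₁ : r ≤ 1) (hdeg : ∀ u ∈ A, (Gᶜ.degree u : ℝ) ≤ d)
    (hroom : 0 < (#A : ℝ) - (m + 1) - d) (hroom' : 3 * d ≤ r * (#A - (m + 1) - d))
    {ι : Type*} (s : Finset ι) (Y : ι → Finset V) (hY : ∀ j ∈ s, (#(Y j) : ℝ) ≤ d * r ^ m)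
    {k : ℕ} (hk : k ≤ m) :
    ∃ B ⊆ A, #B = k + 1 ∧ (G.induce (B : Set V)).Connected ∧
      (#(G.blindSpot A B) : ℝ) ≤ d * r ^ k ∧
      (#{j ∈ s | B ⊆ Y j} : ℝ) ≤ #s * r ^ ((m + 1) * k) := by
  induction k with
  | zero =>
    obtain ⟨v, hv⟩ : A.Nonempty := by
      rw [← card_pos, ← Nat.cast_pos (α := ℝ)]
      linarith
    refine ⟨{v}, singleton_subset_iff.2 hv, card_singleton v, ?_, ?_, ?_⟩
    · rw [coe_singleton, induce_singleton_eq_top]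
      exact connected_top
    · simpa using (Nat.cast_le.2 (G.card_blindSpot_singleton_le A v)).trans (hdeg v hv)
    · simpa using card_filter_le s _
  | succ k ih =>
    obtain ⟨B, hBA, hBcard, hBconn, hBS, hBJ⟩ := ih (by omega)
    have hS : (#(G.blindSpot A B) : ℝ) ≤ d :=
      hBS.trans (mul_le_of_le_one_right hd (pow_le_one₀ hr₀ hr₁))
    have hC : (#A : ℝ) - (m + 1) - d ≤ #(G.boundaryIn A B) := by
      have h := G.card_sdiff_le_card_boundaryIn_add A B
      have hAB := card_sdiff_add_card_eq_card hBA
      have hkm : (k : ℝ) + 1 ≤ m := by exact_mod_cast hk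
      have : (#A : ℝ) ≤ #(G.boundaryIn A B) + #(G.blindSpot A B) + (k + 1) := by
        exact_mod_cast (by omega : #A ≤ #(G.boundaryIn A B) + #(G.blindSpot A B) + (k + 1))
      linarith
    obtain ⟨v, hv, hvS, hvJ⟩ := G.exists_mem_boundaryIn_card_blindSpot_insert_le (B := B) hdeg
      (card_pos.1 (by exact_mod_cast hroom.trans_le hC))
      (hroom'.trans (mul_le_mul_of_nonneg_left hC hr₀)) (pow_nonneg hr₀ m) s Y hY
    simp only [boundaryIn, mem_filter, mem_sdiff] at hv
    obtain ⟨⟨hvA, hvB⟩, w, hwB, hvw⟩ := hv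
    refine ⟨insert v B, insert_subset hvA hBA, by rw [card_insert_of_notMem hvB, hBcard], ?_,
      ?_, ?_⟩
    · rw [coe_insert]
      exact hBconn.induce_insert hwB hvw
    · calc (#(G.blindSpot A (insert v B)) : ℝ) ≤ r * (d * r ^ k) :=
            hvS.trans (mul_le_mul_of_nonneg_left hBS hr₀)
        _ = d * r ^ (k + 1) := by ring
    · calc (#{j ∈ s | insert v B ⊆ Y j} : ℝ) ≤ r * r ^ m * (#s * r ^ ((m + 1) * k)) :=
            hvJ.trans (mul_le_mul_of_nonneg_left hBJ (by positivity))
        _ = #s * r ^ ((m + 1) * (k + 1)) := by ring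

theorem exists_connected_not_subset {A : Finset V} {d r : ℝ} {m : ℕ} (hd : 0 ≤ d)
    (hr₀ : 0 ≤ r) (hr₁ : r ≤ 1) (hdeg : ∀ u ∈ A, (Gᶜ.degree u : ℝ) ≤ d)
    (hroom : 0 < (#A : ℝ) - (m + 1) - d) (hroom' : 3 * d ≤ r * (#A - (m + 1) - d))
    {ι : Type*} (s : Finset ι) (Y : ι → Finset V) (hY : ∀ j ∈ s, (#(Y j) : ℝ) ≤ d * r ^ m)
    (hs : #s * r ^ ((m + 1) * m) < 1) :
    ∃ B ⊆ A, #B = m + 1 ∧ (G.induce (B : Set V)).Connected ∧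
      (#(G.blindSpot A B) : ℝ) ≤ d * r ^ m ∧ ∀ j ∈ s, ¬B ⊆ Y j := by
  obtain ⟨B, hBA, hBcard, hBconn, hBS, hBJ⟩ :=
    G.exists_connected_card_blindSpot_le hd hr₀ hr₁ hdeg hroom hroom' s Y hY le_rfl
  refine ⟨B, hBA, hBcard, hBconn, hBS, fun j hj hBj => ?_⟩
  have : (1 : ℝ) ≤ #{j ∈ s | B ⊆ Y j} := by
    exact_mod_cast card_pos.2 ⟨j, mem_filter.2 ⟨hj, hBj⟩⟩
  linarith

theorem exists_pairwise_touching_card_blindSpot_le {W : Finset V} {d r : ℝ} {t m : ℕ}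
    (hd : 0 ≤ d) (hr₀ : 0 ≤ r) (hr₁ : r ≤ 1) (hdeg : ∀ u ∈ W, (Gᶜ.degree u : ℝ) ≤ d)
    (hroom : 0 < (#W : ℝ) - t * (m + 1) - d) (hroom' : 3 * d ≤ r * (#W - t * (m + 1) - d))
    (ht : t * r ^ ((m + 1) * m) < 1) {i : ℕ} (hi : i ≤ t) :
    ∃ 𝓑 : Finset (Finset V), #𝓑 = i ∧
      (∀ B ∈ 𝓑, #B = m + 1 ∧ (G.induce (B : Set V)).Connected ∧
        (#(G.blindSpot (W \ 𝓑.biUnion id) B) : ℝ) ≤ d * r ^ m) ∧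
      (𝓑 : Set (Finset V)).Pairwise G.Touching := by
  induction i with
  | zero => exact ⟨∅, rfl, by simp, by simp⟩
  | succ i ih =>
    obtain ⟨𝓑, h𝓑card, h𝓑, htouch⟩ := ih (by omega)
    set A := W \ 𝓑.biUnion id
    have hA : (#W : ℝ) - t * (m + 1) - d ≤ #A - (m + 1) - d := by
      have hU := card_biUnion_le_card_mul 𝓑 id (m + 1) fun B hB => (h𝓑 B hB).1.le
      have hW := card_le_card_sdiff_add_card (s := W) (t := 𝓑.biUnion id)
      have : (#W : ℝ) ≤ #A + i * (m + 1) := by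
        rw [h𝓑card] at hU
        exact_mod_cast hW.trans (Nat.add_le_add_left hU _)
      have hit : (i : ℝ) + 1 ≤ t := by exact_mod_cast hi
      nlinarith
    have hs : (#𝓑 : ℝ) * r ^ ((m + 1) * m) < 1 := by
      refine lt_of_le_of_lt ?_ ht
      rw [h𝓑card]
      gcongr
      exact_mod_cast (Nat.le_succ i).trans hi
    obtain ⟨B', hB'A, hB'card, hB'conn, hB'S, hB'⟩ := G.exists_connected_not_subset hd hr₀ hr₁
      (fun u hu => hdeg u (sdiff_subset hu)) (hroom.trans_le hA)
      (hroom'.trans (mul_le_mul_of_nonneg_left hA hr₀)) 𝓑 (G.blindSpot A)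
      (fun B hB => (h𝓑 B hB).2.2) hs
    have hB'touch : ∀ B ∈ 𝓑, G.Touching B' B := fun B hB =>
      G.touching_of_not_subset_blindSpot hB'A
        (disjoint_of_subset_right (subset_biUnion_of_mem id hB) sdiff_disjoint) (hB' B hB)
    have hB'new : B' ∉ 𝓑 := fun h => (hB'touch B' h).ne rfl
    have hS : ∀ B, G.blindSpot (W \ (insert B' 𝓑).biUnion id) B ⊆ G.blindSpot A B :=
      G.blindSpot_mono (sdiff_subset_sdiff le_rfl (biUnion_subset_biUnion_of_subset_left _
        (subset_insert _ _)))
    refine ⟨insert B' 𝓑, by rw [card_insert_of_notMem hB'new, h𝓑card], ?_, ?_⟩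
    · simp only [mem_insert, forall_eq_or_imp]
      refine ⟨⟨hB'card, hB'conn, le_trans (by exact_mod_cast card_le_card (hS B')) hB'S⟩,
        fun B hB => ⟨(h𝓑 B hB).1, (h𝓑 B hB).2.1, ?_⟩⟩
      exact le_trans (by exact_mod_cast card_le_card (hS B)) (h𝓑 B hB).2.2
    · rw [coe_insert]
      exact htouch.insert_of_notMem hB'new fun B hB => ⟨hB'touch B hB, (hB'touch B hB).symm⟩

theorem exists_pairwise_touching {W : Finset V} {d r : ℝ} {t m : ℕ}
    (hd : 0 ≤ d) (hr₀ : 0 ≤ r) (hr₁ : r ≤ 1) (hdeg : ∀ u ∈ W, (Gᶜ.degree u : ℝ) ≤ d)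
    (hroom : 0 < (#W : ℝ) - t * (m + 1) - d) (hroom' : 3 * d ≤ r * (#W - t * (m + 1) - d))
    (ht : t * r ^ ((m + 1) * m) < 1) :
    ∃ 𝓑 : Finset (Finset V), #𝓑 = t ∧ (∀ B ∈ 𝓑, (G.induce (B : Set V)).Connected) ∧
      (𝓑 : Set (Finset V)).Pairwise G.Touching := by
  obtain ⟨𝓑, hcard, h𝓑, htouch⟩ :=
    G.exists_pairwise_touching_card_blindSpot_le hd hr₀ hr₁ hdeg hroom hroom' ht le_rfl
  exact ⟨𝓑, hcard, fun B hB => (h𝓑 B hB).2.1, htouch⟩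

end BlindSpot

section Degrees

variable [Fintype V] (G : SimpleGraph V) [DecidableRel G.Adj]

theorem exists_four_mul_card_ge_forall_degree_le :
    ∃ W : Finset V, 3 * (Fintype.card V : ℝ) ≤ 4 * #W ∧
      ∀ v ∈ W, (Fintype.card V : ℝ) * G.degree v ≤ 4 * ∑ u, (G.degree u : ℝ) := by
  have hbad := (univ : Finset V).mul_card_filter_sum_lt_le (f := fun v => (G.degree v : ℝ))
    (fun _ _ => by positivity) 4
  rw [card_univ] at hbad
  set W : Finset V := {v | Fintype.card V * (G.degree v : ℝ) ≤ 4 * ∑ u, (G.degree u : ℝ)}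
  refine ⟨W, ?_, fun v hv => (mem_filter.1 hv).2⟩
  classical
  have hcover : (univ : Finset V) ⊆
      ({v | 4 * ∑ u, (G.degree u : ℝ) < Fintype.card V * G.degree v} : Finset V) ∪ W :=
    fun v _ => by simp [W, lt_or_ge]
  have : (Fintype.card V : ℝ) ≤
      #{v | 4 * ∑ u, (G.degree u : ℝ) < Fintype.card V * G.degree v} + #W := by
    exact_mod_cast (card_le_card hcover).trans (card_union_le _ _)
  linarith

theorem sum_degree_compl_eq [DecidableEq V] :
    ∑ v, (Gᶜ.degree v : ℝ) = (1 - G.edgeSet.ncard / (Fintype.card V).choose 2) *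
      Fintype.card V * (Fintype.card V - 1) := by
  set n := Fintype.card V
  have hdeg : ∀ v, (Gᶜ.degree v : ℝ) = n - 1 - G.degree v := fun v => by
    have := G.degree_lt_card_verts v
    rw [degree_compl, Nat.cast_sub (by omega), Nat.cast_sub (by omega), Nat.cast_one]
  have he : (G.edgeSet.ncard : ℝ) = #G.edgeFinset := by
    rw [← coe_edgeFinset, Set.ncard_coe_finset]
  have hsum : ∑ v, (G.degree v : ℝ) = 2 * #G.edgeFinset := by
    exact_mod_cast G.sum_degrees_eq_twice_card_edges
  have hchoose : (n.choose 2 : ℝ) = n * (n - 1) / 2 := Nat.cast_choose_two ℝ n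
  simp only [hdeg, sum_sub_distrib, sum_const, card_univ, nsmul_eq_mul, hsum, he]
  rcases eq_or_ne (n.choose 2 : ℝ) 0 with hC | hC
  · have : (#G.edgeFinset : ℝ) = 0 := by
      exact_mod_cast Nat.eq_zero_of_le_zero
        (G.card_edgeFinset_le_card_choose_two.trans_eq (by exact_mod_cast hC))
    rw [this, hC]
    linarith
  · field_simp
    rw [hchoose]
    ring

end Degrees

end SimpleGraph

/-- Let `t ≥ 1`, let `G` be a graph with `n = v(G) ≥ 9t` vertices, let
`q = 1 - e(G)/(n choose 2)` and `l = ⌊n/(9t)⌋`. If `6t·(70q)^(l²) ≤ 1` then `G` has a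
`K_t` minor. -/
theorem dense_graph_has_Kt_minor (t : ℕ) (ht : 0 < t)
    (V : Type) [Fintype V] (G : SimpleGraph V)
    (hn : 9 * t ≤ Fintype.card V)
    (hq : 6 * (t : ℝ) *
        (70 * (1 - (G.edgeSet.ncard : ℝ) / ((Fintype.card V).choose 2))) ^
          ((Fintype.card V / (9 * t)) ^ 2) ≤ 1) :
    G.HasMinor (⊤ : SimpleGraph (Fin t)) := by
  classical
  have hsum := G.sum_degree_compl_eq
  set Q : ℝ := 1 - (G.edgeSet.ncard : ℝ) / ((Fintype.card V).choose 2)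
  set n := Fintype.card V
  set l := n / (9 * t)
  have hl : 1 ≤ l := (Nat.one_le_div_iff (by omega)).2 hn
  have hnl : (9 * t * l : ℝ) ≤ n := by exact_mod_cast Nat.mul_div_le n (9 * t)
  have hnt : (9 * t : ℝ) ≤ n := by exact_mod_cast hn
  have ht₁ : (1 : ℝ) ≤ t := by exact_mod_cast ht
  have hn₀ : (0 : ℝ) < n := by linarith
  have hQ₀ : 0 ≤ Q := by
    have : 0 ≤ ∑ v, (Gᶜ.degree v : ℝ) := by positivity
    nlinarith [mul_pos hn₀ (by linarith : (0 : ℝ) < n - 1)]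
  have hQ₁ : 70 * Q ≤ 1 := by
    by_contra! h
    have := one_le_pow₀ (n := l ^ 2) h.le
    nlinarith
  obtain ⟨W, hW, hWdeg⟩ := Gᶜ.exists_four_mul_card_ge_forall_degree_le
  have hdeg : ∀ v ∈ W, (Gᶜ.degree v : ℝ) ≤ 4 * Q * n := fun v hv => by
    refine le_of_mul_le_mul_left ?_ hn₀
    nlinarith [hWdeg v hv]
  have hroom : n / 4 ≤ (#W : ℝ) - t * (l + 1) - 4 * Q * n := by nlinarith
  have hpow : (70 * Q) ^ ((l + 1) * l) ≤ (70 * Q) ^ (l ^ 2) :=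
    pow_le_pow_of_le_one (by positivity) hQ₁ (by nlinarith)
  obtain ⟨𝓑, hcard, hconn, htouch⟩ := G.exists_pairwise_touching (W := W) (t := t) (m := l)
    (by positivity) (by positivity) hQ₁ hdeg (by linarith)
    (by nlinarith [mul_le_mul_of_nonneg_left hroom (by positivity : (0 : ℝ) ≤ 70 * Q)])
    (by nlinarith)
  exact G.hasMinor_top_of_pairwise_touching (by rw [hcard, Fintype.card_fin]) hconn htouch
end

section
/- There exists a constant C > 0 such that the following holds: for every real ρ ≥ 3 and every graph G whose Hall ratio is at most ρ and whose number of vertices n = v(G) satisfies n ≥ 2ρ, the list chromatic number of G is at most C·ρ·(log(n/ρ))². -/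
open Real

/-- `G` is `k`-list-colorable: for every assignment of lists of at least `k` colors to the
vertices there is a proper coloring choosing each vertex's color from its list. -/
def SimpleGraph.ListColorable {V : Type*} (G : SimpleGraph V) (k : ℕ) : Prop :=
  ∀ L : V → Finset ℕ, (∀ v, k ≤ (L v).card) →
    ∃ c : V → ℕ, (∀ v, c v ∈ L v) ∧ ∀ ⦃u v⦄, G.Adj u v → c u ≠ c v
/-- The list chromatic number of `G`: the least `k` such that `G` is `k`-list-colorable. -/
noncomputable def SimpleGraph.listChromaticNumber {V : Type*} (G : SimpleGraph V) : ℕ :=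
  sInf {k | G.ListColorable k}
/-- The independence number of the subgraph of `H` induced on `s`: the largest size of a
subset of `s` that is pairwise non-adjacent in `H`. -/
noncomputable def SimpleGraph.indepNumOn {V : Type*} (H : SimpleGraph V) (s : Set V) : ℕ :=
  sSup {n | ∃ I : Set V, I ⊆ s ∧ I.Pairwise (fun u v => ¬ H.Adj u v) ∧ I.ncard = n}

/-- The Hall ratio of `G` is at most `ρ`: every non-null subgraph `H` of `G` (a subgraph
is given by a vertex set `s` and an edge-subgraph `H ≤ G`) satisfies `⌈v(H)/α(H)⌉ ≤ ρ`. -/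
def SimpleGraph.HallRatioLE {V : Type*} (G : SimpleGraph V) (ρ : ℝ) : Prop :=
  ∀ H : SimpleGraph V, H ≤ G → ∀ s : Set V, s.Nonempty →
    ((⌈(s.ncard : ℝ) / (H.indepNumOn s : ℝ)⌉ : ℤ) : ℝ) ≤ ρ

/-!
Repeatedly removing a maximum independent set, which holds at least a `1/ρ` fraction of what
is left, splits `G` into `M ≤ ρ log(n/ρ) + 1` independent parts and at most `ρ` leftover
vertices. Now label every color at random: part `j < M` with probability `1/(2M)` each, and
"reserve" with probability `1/2`. A vertex of part `j` is happy if its list contains a color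
labelled `j`. For lists of size `k ≈ 2M log(n/ρ) + O(ρ + log n)` the expected number of unhappy
vertices (leftovers included) is `O(ρ)`, while every list contains at least `τ ≈ 3ρ` reserve
colors with high probability. Happy vertices take a color with the label of their part, unhappy
ones distinct reserve colors (Hall's theorem); different parts have different labels, so the
coloring is proper. The method of conditional expectations, applied to a pessimistic estimator
built from probability generating functions, turns this into a deterministic labelling.
-/

open Finset Function

namespace SimpleGraph

variable {V : Type*} {G : SimpleGraph V} {ρ : ℝ}

theorem HallRatioLE.exists_isIndepSet (hG : G.HallRatioLE ρ) (s : Finset V) (hs : s.Nonempty) :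
    ∃ I ⊆ s, G.IsIndepSet (I : Set V) ∧ (#s : ℝ) ≤ ρ * #I := by
  classical
  set T : Set ℕ :=
    {n | ∃ I : Set V, I ⊆ s ∧ I.Pairwise (fun u v => ¬ G.Adj u v) ∧ I.ncard = n}
  have hbdd : BddAbove T := ⟨#s, by
    rintro _ ⟨I, hIs, -, rfl⟩
    simpa using Set.ncard_le_ncard hIs s.finite_toSet⟩
  obtain ⟨v, hv⟩ := hs
  have hα : 1 ≤ G.indepNumOn s :=
    le_csSup hbdd ⟨{v}, by simpa using hv, Set.pairwise_singleton _ _, Set.ncard_singleton _⟩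
  obtain ⟨I, hIs, hI, hcard⟩ : G.indepNumOn s ∈ T :=
    Nat.sSup_mem ⟨0, ∅, by simp, by simp, by simp⟩ hbdd
  have hfin : I.Finite := s.finite_toSet.subset hIs
  refine ⟨hfin.toFinset, by simpa using hIs, by simpa using hI, ?_⟩
  have hratio := (Int.le_ceil _).trans (hG G le_rfl s ⟨v, hv⟩)
  rw [Set.ncard_coe_finset, div_le_iff₀ (by exact_mod_cast hα)] at hratio
  rwa [← Set.ncard_eq_toFinset_card I hfin, hcard]

theorem exists_indep_parts_of_exists_isIndepSet [DecidableEq V] (hρ : 1 ≤ ρ)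
    (hG : ∀ s : Finset V, s.Nonempty → ∃ I ⊆ s, G.IsIndepSet (I : Set V) ∧ (#s : ℝ) ≤ ρ * #I)
    (s : Finset V) :
    ∃ (M : ℕ) (P : V → ℕ), (∀ u ∈ s, ∀ v ∈ s, P u = P v → P u < M → ¬ G.Adj u v) ∧
      (#{v ∈ s | M ≤ P v} : ℝ) ≤ ρ ∧ (M = 0 ∨ ρ < (1 - ρ⁻¹) ^ (M - 1) * #s) := by
  induction s using Finset.strongInduction with
  | H s ih =>
  by_cases hsmall : (#s : ℝ) ≤ ρ
  · exact ⟨0, fun _ => 0, by simp, by simpa using hsmall, Or.inl rfl⟩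
  push Not at hsmall
  obtain ⟨I, hIs, hI, hsI⟩ := hG s (card_pos.1 (by exact_mod_cast (by linarith : (0:ℝ) < #s)))
  have hIne : I.Nonempty := card_pos.1 (by exact_mod_cast (by nlinarith : (0:ℝ) < #I))
  obtain ⟨M, P, hind, htail, hM⟩ := ih (s \ I) (sdiff_ssubset hIs hIne)
  refine ⟨M + 1, fun v => if v ∈ I then 0 else P v + 1, ?_, ?_, Or.inr ?_⟩
  · intro u hu v hv
    by_cases hu' : u ∈ I <;> by_cases hv' : v ∈ I <;> simp only [hu', hv', if_true, if_false]
    · exact fun _ _ h => hI hu' hv' (G.ne_of_adj h) h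
    all_goals intro hPuv hPu
    · omega
    · omega
    · exact hind u (mem_sdiff.2 ⟨hu, hu'⟩) v (mem_sdiff.2 ⟨hv, hv'⟩) (by omega) (by omega)
  · have htail_eq : {v ∈ s | M + 1 ≤ if v ∈ I then 0 else P v + 1} = {v ∈ s \ I | M ≤ P v} := by
      ext v
      by_cases hv : v ∈ I <;> simp [hv]
    rwa [htail_eq]
  · have hdiff : (#(s \ I) : ℝ) ≤ (1 - ρ⁻¹) * #s := by
      have := (inv_mul_le_iff₀ (by linarith : 0 < ρ)).2 hsI
      rw [card_sdiff_of_subset hIs, Nat.cast_sub (card_le_card hIs)]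
      linarith
    cases M with
    | zero => simpa using hsmall
    | succ m =>
      calc ρ < (1 - ρ⁻¹) ^ m * #(s \ I) := by simpa using hM
        _ ≤ (1 - ρ⁻¹) ^ m * ((1 - ρ⁻¹) * #s) := by
          have : 0 ≤ 1 - ρ⁻¹ := sub_nonneg.2 (inv_le_one_of_one_le₀ hρ)
          gcongr
        _ = (1 - ρ⁻¹) ^ (m + 1 + 1 - 1) * #s := by simp [pow_succ, mul_assoc]

end SimpleGraph

theorem one_sub_inv_pow_le_exp {a : ℝ} (ha : 1 ≤ a) (k : ℕ) :
    (1 - a⁻¹) ^ k ≤ exp (-(k / a)) := by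
  rw [show -((k : ℝ) / a) = k * -a⁻¹ by ring, exp_nat_mul]
  exact pow_le_pow_left₀ (sub_nonneg.2 (inv_le_one_of_one_le₀ ha)) (one_sub_le_exp_neg _) k

theorem mul_one_sub_inv_pow_le {a x y : ℝ} {k : ℕ} (ha : 1 ≤ a) (hx : 0 < x) (hy : 0 < y)
    (hk : a * log (x / y) ≤ k) : x * (1 - a⁻¹) ^ k ≤ y :=
  calc x * (1 - a⁻¹) ^ k ≤ x * exp (-(k / a)) := by gcongr; exact one_sub_inv_pow_le_exp ha k
    _ ≤ x * exp (-log (x / y)) := by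
      gcongr
      rwa [le_div_iff₀' (by linarith)]
    _ = y := by rw [exp_neg, exp_log (div_pos hx hy), inv_div]; field_simp

theorem lt_mul_log_of_lt_one_sub_inv_pow_mul {ρ x : ℝ} {m : ℕ} (hρ : 1 ≤ ρ)
    (h : ρ < (1 - ρ⁻¹) ^ m * x) : m < ρ * log (x / ρ) := by
  have hρ0 : 0 < ρ := by linarith
  have hx : 0 < x := pos_of_mul_pos_right (hρ0.trans h)
    (pow_nonneg (sub_nonneg.2 (inv_le_one_of_one_le₀ hρ)) m)
  have hexp : ρ < exp (-(m / ρ)) * x := h.trans_le (by gcongr; exact one_sub_inv_pow_le_exp hρ m)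
  rw [← div_lt_iff₀' hρ0, lt_log_iff_exp_lt (div_pos hx hρ0), lt_div_iff₀ hρ0]
  calc exp (m / ρ) * ρ < exp (m / ρ) * (exp (-(m / ρ)) * x) := by gcongr
    _ = x := by rw [← mul_assoc, ← exp_add]; simp

section Derandomization

variable {ι β : Type*} [DecidableEq ι] {S : Finset β} {w : β → ℝ}

/-- `Φ f D` behaves like the conditional expectation of a quantity given the labels `f` on the
revealed set `D`, the other labels being independent with law `w` on `S`: revealing one more
label does not change its mean. -/
def IsAveraging (S : Finset β) (w : β → ℝ) (Φ : (ι → β) → Finset ι → ℝ) : Prop :=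
  ∀ f D c, c ∉ D → ∑ j ∈ S, w j * Φ (update f c j) (insert c D) = Φ f D

namespace IsAveraging

variable {Φ Ψ : (ι → β) → Finset ι → ℝ}

theorem const (hw : ∑ j ∈ S, w j = 1) (a : ℝ) : IsAveraging S w (ι := ι) fun _ _ => a :=
  fun _ _ _ _ => by rw [← sum_mul, hw, one_mul]

theorem add (hΦ : IsAveraging S w Φ) (hΨ : IsAveraging S w Ψ) :
    IsAveraging S w fun f D => Φ f D + Ψ f D := fun f D c hc => by
  simp only [mul_add, sum_add_distrib, hΦ f D c hc, hΨ f D c hc]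

theorem const_mul (hΦ : IsAveraging S w Φ) (a : ℝ) : IsAveraging S w fun f D => a * Φ f D :=
  fun f D c hc => by simp only [mul_left_comm _ a, ← mul_sum, hΦ f D c hc]

theorem ite (p : Prop) [Decidable p] (hΦ : p → IsAveraging S w Φ) (hΨ : ¬p → IsAveraging S w Ψ) :
    IsAveraging S w fun f D => if p then Φ f D else Ψ f D := by
  by_cases hp : p
  · simpa [hp] using hΦ hp
  · simpa [hp] using hΨ hp

theorem sum {κ : Type*} (s : Finset κ) {Φ : κ → (ι → β) → Finset ι → ℝ}
    (hΦ : ∀ i ∈ s, IsAveraging S w (Φ i)) : IsAveraging S w fun f D => ∑ i ∈ s, Φ i f D :=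
  fun f D c hc => by
    dsimp only
    rw [← sum_congr rfl fun i hi => hΦ i hi f D c hc, sum_comm]
    simp only [mul_sum]

theorem exists_update_le (hΦ : IsAveraging S w Φ) (hw : ∀ j ∈ S, 0 < w j)
    (hS : ∑ j ∈ S, w j = 1) (f : ι → β) {c : ι} {D : Finset ι} (hc : c ∉ D) :
    ∃ j, Φ (update f c j) (insert c D) ≤ Φ f D := by
  have hne : S.Nonempty := nonempty_of_sum_ne_zero (by rw [hS]; exact one_ne_zero)
  obtain ⟨j, hj, hle⟩ := exists_le_of_sum_le hne
    (f := fun j => w j * Φ (update f c j) (insert c D)) (g := fun j => w j * Φ f D)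
    (by rw [hΦ f D c hc, ← sum_mul, hS, one_mul])
  exact ⟨j, le_of_mul_le_mul_left hle (hw j hj)⟩

theorem exists_le (hΦ : IsAveraging S w Φ) (hw : ∀ j ∈ S, 0 < w j) (hS : ∑ j ∈ S, w j = 1)
    (f : ι → β) (C : Finset ι) : ∃ g, Φ g C ≤ Φ f ∅ := by
  induction C using Finset.induction_on with
  | empty => exact ⟨f, le_rfl⟩
  | insert c C hc ih =>
    obtain ⟨g, hg⟩ := ih
    obtain ⟨j, hj⟩ := hΦ.exists_update_le hw hS g hc
    exact ⟨update g c j, hj.trans hg⟩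

end IsAveraging

variable [DecidableEq β]

/-- The conditional expectation of `x ^ X`, where `X` is the number of elements of `A`
labelled `t`: labels on `D` are given by `f`, the others are independent with law `w`. -/
noncomputable def countPGF (w : β → ℝ) (t : β) (x : ℝ) (A : Finset ι) (f : ι → β)
    (D : Finset ι) : ℝ :=
  x ^ #{c ∈ A ∩ D | f c = t} * (1 - w t + w t * x) ^ #(A \ D)

theorem countPGF_empty (t : β) (x : ℝ) (A : Finset ι) (f : ι → β) :
    countPGF w t x A f ∅ = (1 - w t + w t * x) ^ #A := by
  simp [countPGF]

theorem countPGF_of_subset (t : β) (x : ℝ) {A D : Finset ι} (f : ι → β) (h : A ⊆ D) :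
    countPGF w t x A f D = x ^ #{c ∈ A | f c = t} := by
  simp [countPGF, inter_eq_left.2 h, sdiff_eq_empty_iff_subset.2 h]

theorem isAveraging_countPGF (hS : ∑ j ∈ S, w j = 1) {t : β} (ht : t ∈ S) (x : ℝ)
    (A : Finset ι) : IsAveraging S w (countPGF w t x A) := by
  intro f D c hc
  have hfilter : ∀ j, {c' ∈ A ∩ D | update f c j c' = t} = {c' ∈ A ∩ D | f c' = t} :=
    fun j => filter_congr fun c' hc' => by
      rw [update_of_ne (ne_of_mem_of_not_mem (mem_inter.1 hc').2 hc)]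
  by_cases hcA : c ∈ A
  · have hcount : ∀ j, #{c' ∈ A ∩ insert c D | update f c j c' = t}
        = #{c' ∈ A ∩ D | f c' = t} + if j = t then 1 else 0 := by
      intro j
      rw [inter_insert_of_mem hcA, filter_insert, update_self, hfilter]
      split_ifs with hj
      · exact card_insert_of_notMem fun h => hc (mem_inter.1 (mem_filter.1 h).1).2
      · rfl
    have hrem : #(A \ D) = #(A \ insert c D) + 1 := by
      rw [sdiff_insert, card_erase_add_one (mem_sdiff.2 ⟨hcA, hc⟩)]
    have hmix : ∑ j ∈ S, w j * x ^ (if j = t then 1 else 0) = 1 - w t + w t * x :=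
      calc ∑ j ∈ S, w j * x ^ (if j = t then 1 else 0)
          = ∑ j ∈ S, (w j + if j = t then w j * (x - 1) else 0) :=
            sum_congr rfl fun j _ => by split_ifs <;> ring
        _ = 1 - w t + w t * x := by rw [sum_add_distrib, hS, sum_ite_eq' S t, if_pos ht]; ring
    have hfactor : ∀ a b : ℝ, ∑ j ∈ S, w j * (a * x ^ (if j = t then 1 else 0) * b)
        = (∑ j ∈ S, w j * x ^ (if j = t then 1 else 0)) * (a * b) := fun a b => by
      rw [sum_mul]
      exact sum_congr rfl fun j _ => by ring
    simp only [countPGF, hcount, hrem, pow_add, pow_one, hfactor, hmix]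
    ring
  · have hsame : ∀ j, countPGF w t x A (update f c j) (insert c D) = countPGF w t x A f D := by
      intro j
      rw [countPGF, countPGF, inter_insert_of_notMem hcA, hfilter, sdiff_insert,
        erase_eq_of_notMem fun h => hcA (mem_sdiff.1 h).1]
    simp only [hsame, ← sum_mul, hS, one_mul]

end Derandomization

theorem Finset.exists_injective_mem_of_card_le {ι α : Type*} [Fintype ι] [DecidableEq α]
    (t : ι → Finset α) {τ : ℕ} (ht : ∀ i, τ ≤ #(t i)) (hι : Fintype.card ι ≤ τ) :
    ∃ f : ι → α, Injective f ∧ ∀ i, f i ∈ t i := by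
  refine (all_card_le_biUnion_card_iff_exists_injective t).1 fun s => ?_
  rcases s.eq_empty_or_nonempty with rfl | ⟨i, hi⟩
  · simp
  · exact (card_le_univ s).trans <| hι.trans <| (ht i).trans <|
      card_le_card (subset_biUnion_of_mem t hi)

namespace SimpleGraph

variable {V : Type*} [Fintype V] {G : SimpleGraph V} {P : V → ℕ} {M τ : ℕ}

theorem exists_coloring_of_labeling (hind : ∀ u v, P u = P v → P u < M → ¬ G.Adj u v)
    (L : V → Finset ℕ) (g : ℕ → ℕ) (hres : ∀ v, τ ≤ #{c ∈ L v | g c = M})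
    (hfail : #{v | ¬ (P v < M ∧ ∃ c ∈ L v, g c = P v)} ≤ τ) :
    ∃ col : V → ℕ, (∀ v, col v ∈ L v) ∧ ∀ ⦃u v⦄, G.Adj u v → col u ≠ col v := by
  classical
  set F : Finset V := {v | ¬ (P v < M ∧ ∃ c ∈ L v, g c = P v)}
  obtain ⟨colF, hinj, hcolF⟩ := exists_injective_mem_of_card_le
    (fun v : F => {c ∈ L v | g c = M}) (fun v => hres v) (by simpa using hfail)
  have happy : ∀ v ∉ F, ∃ c ∈ L v, g c = P v ∧ P v < M := fun v hv => by
    obtain ⟨hPv, c, hc, hgc⟩ := not_not.1 (by simpa [F] using hv)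
    exact ⟨c, hc, hgc, hPv⟩
  choose! colH hcolH using happy
  refine ⟨fun v => if hv : v ∈ F then colF ⟨v, hv⟩ else colH v, fun v => ?_, fun u v huv => ?_⟩
  · by_cases hv : v ∈ F
    · simpa [hv] using (mem_filter.1 (hcolF ⟨v, hv⟩)).1
    · simpa [hv] using (hcolH v hv).1
  intro heq
  dsimp only at heq
  by_cases hu : u ∈ F <;> by_cases hv : v ∈ F
  · rw [dif_pos hu, dif_pos hv] at heq
    exact G.ne_of_adj huv (congrArg Subtype.val (hinj heq))
  · rw [dif_pos hu, dif_neg hv] at heq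
    have := (mem_filter.1 (hcolF ⟨u, hu⟩)).2
    rw [heq, (hcolH v hv).2.1] at this
    exact (hcolH v hv).2.2.ne this
  · rw [dif_neg hu, dif_pos hv] at heq
    have := (mem_filter.1 (hcolF ⟨v, hv⟩)).2
    rw [← heq, (hcolH u hu).2.1] at this
    exact (hcolH u hu).2.2.ne this
  · rw [dif_neg hu, dif_neg hv] at heq
    obtain ⟨-, hgu, hPu⟩ := hcolH u hu
    obtain ⟨-, hgv, -⟩ := hcolH v hv
    exact hind u v (by rw [← hgu, ← hgv, heq]) hPu huv

end SimpleGraph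

section Potential

variable {V : Type*} [Fintype V] (P : V → ℕ) (M τ : ℕ) (ρ : ℝ) (L : V → Finset ℕ)

noncomputable def labelWeight (j : ℕ) : ℝ := if j = M then 2⁻¹ else (2 * M)⁻¹

theorem labelWeight_pos (hM : M ≠ 0) (j : ℕ) : 0 < labelWeight M j := by
  unfold labelWeight
  split_ifs <;> positivity

theorem sum_labelWeight (hM : M ≠ 0) : ∑ j ∈ range (M + 1), labelWeight M j = 1 := by
  rw [sum_range_succ, sum_congr rfl fun j hj =>
      show labelWeight M j = (2 * M : ℝ)⁻¹ from if_neg (mem_range.1 hj).ne,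
    sum_const, card_range, labelWeight, if_pos rfl, nsmul_eq_mul]
  field_simp
  norm_num

/-- Pessimistic estimator: `(#unhappy vertices) / (4ρ) + 2 ^ τ * ∑ v, 2 ^ (-#reserve colors
of v)`, conditioned on the labels revealed so far; vertices with `M ≤ P v` count as unhappy. -/
noncomputable def coloringPotential (f : ℕ → ℕ) (D : Finset ℕ) : ℝ :=
  ∑ v, ((4 * ρ)⁻¹ * (if P v < M then countPGF (labelWeight M) (P v) 0 (L v) f D else 1) +
    2 ^ τ * countPGF (labelWeight M) M 2⁻¹ (L v) f D)

theorem isAveraging_coloringPotential (hM : M ≠ 0) :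
    IsAveraging (range (M + 1)) (labelWeight M) (coloringPotential P M τ ρ L) :=
  have hS := sum_labelWeight M hM
  .sum _ fun v _ =>
    ((IsAveraging.ite _
      (fun hv => isAveraging_countPGF (t := P v) hS (mem_range.2 (by omega)) _ _)
      fun _ => .const hS 1).const_mul _).add
    ((isAveraging_countPGF hS (self_mem_range_succ M) _ _).const_mul _)

theorem coloringPotential_empty_le (hρ : 0 < ρ) (hM : M ≠ 0) {k : ℕ} (hL : ∀ v, k ≤ #(L v))
    (htail : (#{v | M ≤ P v} : ℝ) ≤ ρ)
    (hk₁ : Fintype.card V * (1 - (2 * M : ℝ)⁻¹) ^ k ≤ ρ)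
    (hk₂ : Fintype.card V * 2 ^ τ * (3 / 4 : ℝ) ^ k ≤ 1 / 4) :
    coloringPotential P M τ ρ L (fun _ => 0) ∅ ≤ 3 / 4 := by
  have hM' : (1 : ℝ) ≤ M := by exact_mod_cast Nat.one_le_iff_ne_zero.2 hM
  have hq : 0 ≤ 1 - (2 * M : ℝ)⁻¹ := sub_nonneg.2 (inv_le_one_of_one_le₀ (by linarith))
  have hmain : ∑ v, (if P v < M then countPGF (labelWeight M) (P v) 0 (L v) (fun _ => 0) ∅ else 1)
      ≤ 2 * ρ :=
    calc _ ≤ ∑ v : V, ((1 - (2 * M : ℝ)⁻¹) ^ k + if M ≤ P v then 1 else 0) := by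
          refine sum_le_sum fun v _ => ?_
          by_cases hv : P v < M
          · simp only [hv, if_true, countPGF_empty, labelWeight, hv.ne, if_false, mul_zero,
              add_zero, not_le.2 hv]
            simpa using pow_le_pow_of_le_one hq (by simp) (hL v)
          · simp only [hv, if_false, not_lt.1 hv, if_true]
            linarith [pow_nonneg hq k]
      _ ≤ 2 * ρ := by
        rw [sum_add_distrib, sum_const, card_univ, nsmul_eq_mul, sum_boole]
        linarith
  have hreserve : ∑ v, 2 ^ τ * countPGF (labelWeight M) M 2⁻¹ (L v) (fun _ => 0) ∅ ≤ 1 / 4 :=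
    calc _ ≤ ∑ v : V, 2 ^ τ * (3 / 4 : ℝ) ^ k := by
          refine sum_le_sum fun v _ => ?_
          rw [countPGF_empty, labelWeight, if_pos rfl,
            show (1 - 2⁻¹ + 2⁻¹ * 2⁻¹ : ℝ) = 3 / 4 by norm_num]
          gcongr 2 ^ τ * ?_
          exact pow_le_pow_of_le_one (by norm_num) (by norm_num) (hL v)
      _ ≤ 1 / 4 := by rw [sum_const, card_univ, nsmul_eq_mul, ← mul_assoc]; exact hk₂
  rw [coloringPotential, sum_add_distrib, ← mul_sum]
  have : (4 * ρ)⁻¹ * (2 * ρ) = 1 / 2 := by field_simp; norm_num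
  nlinarith [inv_pos.2 (by linarith : 0 < 4 * ρ)]

theorem coloringPotential_of_subset {f : ℕ → ℕ} {D : Finset ℕ} (hL : ∀ v, L v ⊆ D) :
    coloringPotential P M τ ρ L f D =
      (4 * ρ)⁻¹ * ∑ v, (if P v < M then (0 : ℝ) ^ #{c ∈ L v | f c = P v} else 1) +
        2 ^ τ * ∑ v, (2⁻¹ : ℝ) ^ #{c ∈ L v | f c = M} := by
  simp only [coloringPotential, countPGF_of_subset _ _ _ (hL _), sum_add_distrib, mul_sum]

variable {P M τ ρ L}

theorem le_card_reserve_of_coloringPotential_lt (hρ : 0 < ρ) {f : ℕ → ℕ} {D : Finset ℕ}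
    (hL : ∀ v, L v ⊆ D) (h : coloringPotential P M τ ρ L f D < 2) (v : V) :
    τ ≤ #{c ∈ L v | f c = M} := by
  by_contra! hr
  have hreserve : 2 ≤ 2 ^ τ * (2⁻¹ : ℝ) ^ #{c ∈ L v | f c = M} := by
    rw [inv_pow, ← div_eq_mul_inv, le_div_iff₀ (by positivity), ← pow_succ']
    exact pow_le_pow_right₀ one_le_two hr
  have hsingle : 2 ^ τ * (2⁻¹ : ℝ) ^ #{c ∈ L v | f c = M} ≤
      2 ^ τ * ∑ u, (2⁻¹ : ℝ) ^ #{c ∈ L u | f c = M} := by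
    gcongr
    exact single_le_sum (f := fun u => (2⁻¹ : ℝ) ^ #{c ∈ L u | f c = M})
      (fun u _ => by positivity) (mem_univ v)
  have hunhappy : 0 ≤ (4 * ρ)⁻¹ *
      ∑ v, (if P v < M then (0 : ℝ) ^ #{c ∈ L v | f c = P v} else 1) := by
    refine mul_nonneg (by positivity) (sum_nonneg fun v _ => ?_)
    split_ifs <;> positivity
  rw [coloringPotential_of_subset P M τ ρ L hL] at h
  linarith

theorem card_unhappy_le_of_coloringPotential_le (hρ : 0 < ρ) {f : ℕ → ℕ} {D : Finset ℕ}
    (hL : ∀ v, L v ⊆ D) (h : coloringPotential P M τ ρ L f D ≤ 3 / 4) :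
    (#{v | ¬ (P v < M ∧ ∃ c ∈ L v, f c = P v)} : ℝ) ≤ 3 * ρ := by
  have hunhappy : (#{v | ¬ (P v < M ∧ ∃ c ∈ L v, f c = P v)} : ℝ) ≤
      ∑ v, (if P v < M then (0 : ℝ) ^ #{c ∈ L v | f c = P v} else 1) := by
    rw [← sum_boole]
    refine sum_le_sum fun v _ => ?_
    by_cases hv : P v < M
    · simp only [hv, true_and, if_true, zero_pow_eq, card_eq_zero, filter_eq_empty_iff]
      split_ifs <;> simp_all
    · simp [hv]
  have hreserve : 0 ≤ 2 ^ τ * ∑ v, (2⁻¹ : ℝ) ^ #{c ∈ L v | f c = M} := by positivity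
  rw [coloringPotential_of_subset P M τ ρ L hL] at h
  have : (4 * ρ)⁻¹ * #{v | ¬ (P v < M ∧ ∃ c ∈ L v, f c = P v)} ≤ 3 / 4 := by
    nlinarith [inv_pos.2 (by linarith : 0 < 4 * ρ)]
  rw [inv_mul_le_iff₀ (by linarith)] at this
  linarith

end Potential

namespace SimpleGraph

variable {V : Type*} [Fintype V] {G : SimpleGraph V} {P : V → ℕ} {M τ k : ℕ} {ρ : ℝ}

theorem listColorable_of_parts (hρ : 0 < ρ) (hM : M ≠ 0)
    (hind : ∀ u v, P u = P v → P u < M → ¬ G.Adj u v) (htail : (#{v | M ≤ P v} : ℝ) ≤ ρ)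
    (hτ : 3 * ρ ≤ τ) (hk₁ : Fintype.card V * (1 - (2 * M : ℝ)⁻¹) ^ k ≤ ρ)
    (hk₂ : Fintype.card V * 2 ^ τ * (3 / 4 : ℝ) ^ k ≤ 1 / 4) : G.ListColorable k := by
  classical
  intro L hL
  have hsub : ∀ v, L v ⊆ univ.biUnion L := fun v => subset_biUnion_of_mem L (mem_univ v)
  obtain ⟨g, hg⟩ := (isAveraging_coloringPotential P M τ ρ L hM).exists_le
    (fun j _ => labelWeight_pos M hM j) (sum_labelWeight M hM) (fun _ => 0) (univ.biUnion L)
  have hpot := hg.trans (coloringPotential_empty_le P M τ ρ L hρ hM hL htail hk₁ hk₂)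
  exact exists_coloring_of_labeling hind L g
    (le_card_reserve_of_coloringPotential_lt hρ hsub (by linarith))
    (by exact_mod_cast (card_unhappy_le_of_coloringPotential_le hρ hsub hpot).trans hτ)

end SimpleGraph

theorem exists_listColoring_params {ρ n : ℝ} {M : ℕ} (hρ : 3 ≤ ρ) (hn : 2 * ρ ≤ n)
    (hM : M ≠ 0) (hMlog : (M : ℝ) - 1 < ρ * log (n / ρ)) :
    ∃ τ k : ℕ, 3 * ρ ≤ τ ∧ n * (1 - (2 * M : ℝ)⁻¹) ^ k ≤ ρ ∧
      n * 2 ^ τ * (3 / 4 : ℝ) ^ k ≤ 1 / 4 ∧ (k : ℝ) ≤ 100 * ρ * log (n / ρ) ^ 2 := by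
  set Lg := log (n / ρ)
  have hρ0 : 0 < ρ := by linarith
  have hn0 : 0 < n := by linarith
  have hLg : log 2 ≤ Lg := log_le_log two_pos (by rwa [le_div_iff₀ hρ0])
  have hlog2 := log_two_gt_d9
  have hlog2' := log_two_lt_d9
  have hM' : (1 : ℝ) ≤ M := by exact_mod_cast Nat.one_le_iff_ne_zero.2 hM
  set τ := ⌈3 * ρ⌉₊
  have hτ : (τ : ℝ) < 3 * ρ + 1 := Nat.ceil_lt_add_one (by positivity)
  have hlog : log (n * 2 ^ τ / 4⁻¹) = Lg + log ρ + τ * log 2 + 2 * log 2 := by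
    rw [log_div (by positivity) (by norm_num), log_mul hn0.ne' (by positivity), log_pow,
      log_inv, show (4 : ℝ) = 2 ^ 2 by norm_num, log_pow]
    simp only [Lg, log_div hn0.ne' hρ0.ne']
    push_cast
    ring
  have hlogρ : 0 ≤ log ρ ∧ log ρ ≤ ρ :=
    ⟨log_nonneg (by linarith), (log_le_sub_one_of_pos hρ0).trans (by linarith)⟩
  have hreserve : 0 ≤ log (n * 2 ^ τ / 4⁻¹) := by rw [hlog]; nlinarith
  have hparts : 0 ≤ 2 * M * Lg := by nlinarith
  set K := 2 * M * Lg + 4 * log (n * 2 ^ τ / 4⁻¹) with hK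
  have hK₁ : 2 * M * Lg ≤ ⌈K⌉₊ := (by linarith : 2 * M * Lg ≤ K).trans (Nat.le_ceil K)
  have hK₂ : 4 * log (n * 2 ^ τ / 4⁻¹) ≤ ⌈K⌉₊ :=
    (by linarith : 4 * log (n * 2 ^ τ / 4⁻¹) ≤ K).trans (Nat.le_ceil K)
  refine ⟨τ, ⌈K⌉₊, Nat.le_ceil _, mul_one_sub_inv_pow_le (by linarith) hn0 hρ0 (by
    simpa [mul_assoc] using hK₁), ?_, ?_⟩
  · have := mul_one_sub_inv_pow_le (by norm_num) (by positivity) (by norm_num) hK₂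
    norm_num at this ⊢
    exact this
  · have hKlt : (⌈K⌉₊ : ℝ) < K + 1 := Nat.ceil_lt_add_one (by linarith)
    have hMLg : M * Lg < (ρ * Lg + 1) * Lg := by nlinarith
    have h1 : 0.69 * Lg ≤ Lg ^ 2 := by nlinarith
    have h2 : 3 * Lg ^ 2 ≤ ρ * Lg ^ 2 := by nlinarith
    have h3 : 0.47 * ρ ≤ ρ * Lg ^ 2 := by nlinarith
    have h4 : τ * log 2 ≤ (3 * ρ + 1) * 0.7 := by nlinarith
    rw [hlog] at hK
    linarith

/-- There is a constant `C > 0` such that every graph `G` with Hall ratio at most `ρ`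
(`ρ ≥ 3`) and `n = v(G) ≥ 2ρ` vertices has list chromatic number at most
`C·ρ·(log(n/ρ))²`. -/
theorem list_chromatic_number_of_hall_ratio :
    ∃ C : ℝ, 0 < C ∧ ∀ ρ : ℝ, 3 ≤ ρ →
      ∀ (V : Type) [Fintype V] (G : SimpleGraph V),
        G.HallRatioLE ρ → 2 * ρ ≤ (Fintype.card V : ℝ) →
        (G.listChromaticNumber : ℝ) ≤
          C * ρ * Real.log ((Fintype.card V : ℝ) / ρ) ^ 2 := by
  refine ⟨100, by norm_num, fun ρ hρ V _ G hG hn => ?_⟩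
  classical
  obtain ⟨M, P, hind, htail, hM⟩ :=
    SimpleGraph.exists_indep_parts_of_exists_isIndepSet (by linarith) hG.exists_isIndepSet univ
  have hM0 : M ≠ 0 := by
    rintro rfl
    simp only [zero_le, filter_true, card_univ] at htail
    linarith
  have hMlog : (M : ℝ) - 1 < ρ * log (Fintype.card V / ρ) := by
    have := lt_mul_log_of_lt_one_sub_inv_pow_mul (by linarith) (hM.resolve_left hM0)
    rwa [card_univ, Nat.cast_sub (Nat.one_le_iff_ne_zero.2 hM0), Nat.cast_one] at this
  obtain ⟨τ, k, hτ, hk₁, hk₂, hk⟩ :=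
    exists_listColoring_params hρ hn hM0 hMlog
  have hcol : G.ListColorable k := SimpleGraph.listColorable_of_parts (by linarith) hM0
    (fun u v => hind u (mem_univ u) v (mem_univ v)) htail hτ hk₁ hk₂
  exact (Nat.cast_le.2 (Nat.sInf_le hcol)).trans hk
end

section
/- Let k ≥ 1 be an integer. If G is a non-empty graph of minimum degree d ≥ 6k, then there exist a non-empty subset X ⊆ V(G) and a matching M from the coboundary Y of X to X that saturates Y, such that |Y| ≤ 3k and the graph G[X ∪ Y]/M (obtained from the subgraph of G induced on X ∪ Y by contracting every edge of M) is k-connected. -/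
open Real

/-- `G` is `k`-connected: it has more than `k` vertices and removing any set of fewer
than `k` vertices leaves it connected. -/
def SimpleGraph.IsKConnected {V : Type*} [Fintype V] (G : SimpleGraph V) (k : ℕ) : Prop :=
  k < Fintype.card V ∧ ∀ s : Finset V, s.card < k → (G.induce ((↑s : Set V)ᶜ)).Connected

/-- The vertex connectivity of `G`: the largest `k` such that `G` is `k`-connected. -/
noncomputable def SimpleGraph.vertexConnectivity {V : Type*} [Fintype V]
    (G : SimpleGraph V) : ℕ :=
  sSup {k | G.IsKConnected k}
/-- The coboundary of `X` in `G`: all vertices outside `X` with a neighbor in `X`. -/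
def SimpleGraph.coboundary {V : Type*} (G : SimpleGraph V) (X : Set V) : Set V :=
  (⋃ v ∈ X, G.neighborSet v) \ X

/-- The graph `G[X ∪ Y]/M` obtained from the subgraph of `G` induced on `X ∪ Y` by
contracting the matching `M = {{y, f y} : y ∈ Y}` from `Y` into `X`; its vertices are the
elements of `X`, and two of them are adjacent if some edge of `G` joins their bags, the
bag of `x ∈ X` being `{x} ∪ {y ∈ Y | f y = x}`. -/
def SimpleGraph.contractMatching {V : Type*} (G : SimpleGraph V) (X : Finset V)
    (Y : Set V) (f : V → V) : SimpleGraph {x // x ∈ X} where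
  Adj x₁ x₂ := x₁ ≠ x₂ ∧ ∃ u v : V, G.Adj u v ∧
    (u = ↑x₁ ∨ (u ∈ Y ∧ f u = ↑x₁)) ∧ (v = ↑x₂ ∨ (v ∈ Y ∧ f v = ↑x₂))
  symm := by
    constructor
    rintro x₁ x₂ ⟨hne, u, v, hadj, hu, hv⟩
    exact ⟨hne.symm, v, u, hadj.symm, hv, hu⟩
  loopless := by constructor; rintro x ⟨hne, -⟩; exact hne rfl

/-!
Take `X` inclusion-minimal among the nonempty vertex sets with at most `3k` coboundary vertices
(`V` itself is one). Minimum degree `6k` forces `|X| > 3k`. If a set `S` of coboundary vertices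
had fewer than `|S|` neighbours `T` in `X`, then `X \ T` would have a smaller coboundary than `X`;
so Hall's theorem gives the matching. If deleting `s` (`|s| < k`) separated the contraction into
`A` and `B`, then `∂A` and `∂B` would lie in `s` together with the coboundary vertices matched into
`s ∪ A`, resp. `s ∪ B`; injectivity of the matching gives `|∂A| + |∂B| ≤ 3|s| + |∂X| < 6k`, and
`A` or `B` would contradict the minimality of `X`.
-/

open Set

theorem Set.exists_injOn_of_forall_ncard_le {α β : Type*} [Finite β] [Nonempty β] {Y : Set α}
    (r : α → β → Prop) (h : ∀ S ⊆ Y, S.ncard ≤ {b | ∃ a ∈ S, r a b}.ncard) :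
    ∃ f : α → β, (∀ a ∈ Y, r a (f a)) ∧ InjOn f Y := by
  classical
  have := Fintype.ofFinite β
  obtain ⟨g, hg, hgr⟩ := (Fintype.all_card_le_filter_rel_iff_exists_injective
    (fun (a : Y) b => r a b)).mp fun (A : Finset Y) => by
      convert h (Subtype.val '' (A : Set Y)) (by simp) using 1
      · rw [ncard_image_of_injective _ Subtype.val_injective, ncard_coe_finset]
      · rw [← ncard_coe_finset]; congr 1; ext b; simp
  set f := Function.extend Subtype.val g fun _ => Classical.arbitrary β
  have hfg : ∀ a : Y, f a = g a := Subtype.val_injective.extend_apply g _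
  refine ⟨f, fun a ha => hfg ⟨a, ha⟩ ▸ hgr ⟨a, ha⟩, fun a ha b hb hab => ?_⟩
  rw [hfg ⟨a, ha⟩, hfg ⟨b, hb⟩] at hab
  exact congrArg Subtype.val (hg hab)

theorem Set.ncard_inter_preimage_union_add_le {α β : Type*} [Finite α] [Finite β] {f : α → β}
    {Y : Set α} (hf : InjOn f Y) {S P Q : Set β} (hPQ : Disjoint P Q) :
    (Y ∩ f ⁻¹' (S ∪ P)).ncard + (Y ∩ f ⁻¹' (S ∪ Q)).ncard ≤ Y.ncard + S.ncard := by
  rw [← ncard_union_add_ncard_inter]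
  have hinter : (Y ∩ f ⁻¹' (S ∪ P)) ∩ (Y ∩ f ⁻¹' (S ∪ Q)) ⊆ Y ∩ f ⁻¹' S := by
    rintro a ⟨⟨ha, hP⟩, -, hQ⟩
    refine ⟨ha, ?_⟩
    rcases hP with hS | hP
    · exact hS
    rcases hQ with hS | hQ
    · exact hS
    exact absurd hQ (hPQ.notMem_of_mem_left hP)
  exact add_le_add (ncard_le_ncard (union_subset inter_subset_left inter_subset_left))
    ((ncard_le_ncard hinter).trans
      (ncard_le_ncard_of_injOn f (fun a ha => ha.2) (hf.mono inter_subset_left)))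

namespace SimpleGraph

variable {V : Type*} (G : SimpleGraph V)

lemma mem_coboundary {X : Set V} {w : V} :
    w ∈ G.coboundary X ↔ w ∉ X ∧ ∃ x ∈ X, G.Adj x w := by
  simp [coboundary, and_comm]

@[simp]
lemma coboundary_univ : G.coboundary univ = ∅ := by
  simp [coboundary]

lemma coboundary_diff_subset {X S T : Set V} (hT : ∀ s ∈ S, ∀ x ∈ X, G.Adj s x → x ∈ T) :
    G.coboundary (X \ T) ⊆ (G.coboundary X \ S) ∪ T := by
  intro w hw
  obtain ⟨hwXT, x, ⟨hxX, hxT⟩, hxw⟩ := G.mem_coboundary.mp hw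
  by_cases hwX : w ∈ X
  · exact Or.inr (by_contra fun hwT => hwXT ⟨hwX, hwT⟩)
  · exact Or.inl ⟨G.mem_coboundary.mpr ⟨hwX, x, hxX, hxw⟩,
      fun hwS => hxT (hT w hwS x hxX hxw.symm)⟩

lemma ncard_neighborSet_lt [Finite V] {X : Set V} {v : V} (hv : v ∈ X) :
    (G.neighborSet v).ncard < X.ncard + (G.coboundary X).ncard := by
  have hsub : G.neighborSet v ⊂ X ∪ G.coboundary X := by
    refine ssubset_of_subset_of_ne (fun w hw => ?_) fun h => ?_
    · by_cases hwX : w ∈ X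
      · exact Or.inl hwX
      · exact Or.inr (G.mem_coboundary.mpr ⟨hwX, v, hv, hw⟩)
    · exact G.loopless.irrefl v (h ▸ Or.inl hv : v ∈ G.neighborSet v)
  exact (ncard_lt_ncard hsub).trans_le (ncard_union_le _ _)

def CoboundaryAtMost (m : ℕ) (A : Set V) : Prop :=
  A.Nonempty ∧ (G.coboundary A).ncard ≤ m

lemma exists_minimal_coboundaryAtMost [Finite V] [Nonempty V] (m : ℕ) :
    ∃ X, Minimal (G.CoboundaryAtMost m) X :=
  exists_minimal_of_wellFoundedLT _ ⟨univ, univ_nonempty, by simp⟩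

lemma ncard_le_ncard_adj_of_minimal [Finite V] {m : ℕ} {X : Set V}
    (hX : Minimal (G.CoboundaryAtMost m) X) (hYX : (G.coboundary X).ncard ≤ X.ncard)
    {S : Set V} (hS : S ⊆ G.coboundary X) :
    S.ncard ≤ {x | ∃ s ∈ S, G.Adj s x ∧ x ∈ X}.ncard := by
  set T := {x | ∃ s ∈ S, G.Adj s x ∧ x ∈ X}
  have hT : ∀ s ∈ S, ∀ x ∈ X, G.Adj s x → x ∈ T := fun s hs x hx h => ⟨s, hs, h, hx⟩
  have hSY := ncard_le_ncard hS
  by_contra! hTS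
  have hcob : (G.coboundary (X \ T)).ncard < (G.coboundary X).ncard := calc
    _ ≤ (G.coboundary X \ S).ncard + T.ncard :=
      (ncard_le_ncard (G.coboundary_diff_subset hT)).trans (ncard_union_le _ _)
    _ = (G.coboundary X).ncard - S.ncard + T.ncard := by rw [ncard_sdiff hS]
    _ < _ := by omega
  have hne : (X \ T).Nonempty := by
    rw [nonempty_iff_ne_empty, Ne, sdiff_eq_empty]
    intro hXT
    have := ncard_le_ncard hXT
    omega
  have hlt : X \ T < X := sdiff_subset.ssubset_of_ne fun h => hcob.ne (by rw [h])
  exact hX.not_prop_of_lt hlt ⟨hne, hcob.le.trans hX.prop.2⟩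

lemma exists_separation_of_not_connected_induce {W : Type*} (H : SimpleGraph W) {s : Set W}
    (hs : sᶜ.Nonempty) (h : ¬ (H.induce sᶜ).Connected) :
    ∃ A : Set W, A.Nonempty ∧ (sᶜ \ A).Nonempty ∧ ∀ a ∈ A, ∀ b ∉ s ∪ A, ¬ H.Adj a b := by
  have : Nonempty ↥sᶜ := hs.to_subtype
  obtain ⟨u, v, huv⟩ : ∃ u v, ¬ (H.induce sᶜ).Reachable u v := by
    by_contra! hr
    exact h ⟨hr⟩
  refine ⟨{a | ∃ ha : a ∈ sᶜ, (H.induce sᶜ).Reachable u ⟨a, ha⟩},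
    ⟨u, u.2, .rfl⟩, ⟨v, v.2, fun ⟨_, hr⟩ => huv hr⟩, ?_⟩
  rintro a ⟨ha, hua⟩ b hb hab
  simp only [mem_union, not_or] at hb
  have hab' : (H.induce sᶜ).Adj ⟨a, ha⟩ ⟨b, hb.1⟩ := hab
  exact hb.2 ⟨hb.1, hua.trans hab'.reachable⟩

lemma coboundary_image_subset_of_contractMatching {X : Finset V} {f : V → V}
    (hf : ∀ y ∈ G.coboundary ↑X, f y ∈ X) {S A : Set X}
    (hA : ∀ a ∈ A, ∀ b ∉ S ∪ A, ¬ (G.contractMatching X (G.coboundary ↑X) f).Adj a b) :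
    G.coboundary (Subtype.val '' A) ⊆
      Subtype.val '' S ∪ (G.coboundary ↑X ∩ f ⁻¹' (Subtype.val '' (S ∪ A))) := by
  intro w hw
  obtain ⟨hwA, _, ⟨a, ha, rfl⟩, hadj⟩ := G.mem_coboundary.mp hw
  by_cases hwX : w ∈ X
  · refine Or.inl (by_contra fun hwS => hA a ha ⟨w, hwX⟩ ?_ ⟨?_, a, w, hadj, .inl rfl, .inl rfl⟩)
    · rintro (h | h)
      exacts [hwS ⟨_, h, rfl⟩, hwA ⟨_, h, rfl⟩]
    · exact fun h => hwA ⟨a, ha, congrArg Subtype.val h⟩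
  · have hwY : w ∈ G.coboundary ↑X := G.mem_coboundary.mpr ⟨hwX, a, a.2, hadj⟩
    refine Or.inr ⟨hwY, by_contra fun hfw => hA a ha ⟨f w, hf w hwY⟩ (fun h => hfw ⟨_, h, rfl⟩)
      ⟨?_, a, w, hadj, .inl rfl, .inr ⟨hwY, rfl⟩⟩⟩
    exact fun h => hfw ⟨a, .inr ha, congrArg Subtype.val h⟩

lemma exists_matching_of_minimal [Finite V] {m : ℕ} {X : Set V}
    (hX : Minimal (G.CoboundaryAtMost m) X) (hYX : (G.coboundary X).ncard ≤ X.ncard) :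
    ∃ f : V → V, (∀ y ∈ G.coboundary X, G.Adj y (f y) ∧ f y ∈ X) ∧
      InjOn f (G.coboundary X) := by
  have : Nonempty V := ⟨hX.prop.1.some⟩
  refine exists_injOn_of_forall_ncard_le (fun y x => G.Adj y x ∧ x ∈ X) fun S hS => ?_
  exact G.ncard_le_ncard_adj_of_minimal hX hYX hS

lemma contractMatching_isKConnected_of_minimal [Finite V] {k : ℕ} {X : Finset V} {f : V → V}
    (hX : Minimal (G.CoboundaryAtMost (3 * k)) ↑X) (hk : k < X.card)
    (hf : ∀ y ∈ G.coboundary ↑X, f y ∈ X) (hinj : InjOn f (G.coboundary ↑X)) :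
    (G.contractMatching X (G.coboundary ↑X) f).IsKConnected k := by
  refine ⟨by simpa using hk, fun s hs => by_contra fun hconn => ?_⟩
  have hsc : (↑s : Set X)ᶜ.Nonempty := by
    obtain ⟨a, -, ha⟩ := Finset.exists_mem_notMem_of_card_lt_card
      (hs.trans (by simpa using hk) : s.card < (Finset.univ : Finset X).card)
    exact ⟨a, ha⟩
  obtain ⟨A, hA, hB, hsepA⟩ := exists_separation_of_not_connected_induce _ hsc hconn
  set B := (↑s : Set X)ᶜ \ A
  have hsepB : ∀ b ∈ B, ∀ a ∉ ↑s ∪ B, ¬ (G.contractMatching X (G.coboundary ↑X) f).Adj b a := by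
    intro b hb a ha hba
    simp only [B, mem_union, mem_sdiff, mem_compl_iff, not_or, not_and, not_not] at hb ha
    exact hsepA a (ha.2 ha.1) b (by simp [hb.1, hb.2]) hba.symm
  have hbig : ∀ C : Set X, C.Nonempty → Cᶜ.Nonempty →
      3 * k < (G.coboundary (Subtype.val '' C)).ncard := by
    rintro C hC ⟨c, hc⟩
    have hlt : Subtype.val '' C < ↑X := by
      refine ssubset_iff_of_subset (by rintro _ ⟨x, -, rfl⟩; exact x.2) |>.mpr ⟨c, c.2, ?_⟩
      rintro ⟨c', hc', hcc'⟩
      exact hc (Subtype.val_injective hcc' ▸ hc')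
    simpa [CoboundaryAtMost, hC.image] using hX.not_prop_of_lt hlt
  have hcobA := (ncard_le_ncard (G.coboundary_image_subset_of_contractMatching hf hsepA)).trans
    (ncard_union_le _ _)
  have hcobB := (ncard_le_ncard (G.coboundary_image_subset_of_contractMatching hf hsepB)).trans
    (ncard_union_le _ _)
  rw [image_union] at hcobA hcobB
  have hdisj : Disjoint (Subtype.val '' A) (Subtype.val '' B) :=
    (disjoint_image_iff Subtype.val_injective).mpr disjoint_sdiff_right
  have hsum := ncard_inter_preimage_union_add_le hinj (S := Subtype.val '' (↑s : Set X)) hdisj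
  have hScard : (Subtype.val '' (↑s : Set X)).ncard = s.card := by
    rw [ncard_image_of_injective _ Subtype.val_injective, ncard_coe_finset]
  have hA' := hbig A hA (hB.mono fun x hx => hx.2)
  have hB' := hbig B hB (hA.mono fun x hx hxB => hxB.2 hx)
  have hY := hX.prop.2
  omega

end SimpleGraph

theorem exists_highly_connected_contraction_general (k : ℕ)
    (V : Type) [Fintype V] [Nonempty V] (G : SimpleGraph V) (d : ℕ) (hd : 6 * k ≤ d)
    (hdeg : ∀ v : V, d ≤ (G.neighborSet v).ncard) :
    ∃ (X : Finset V) (f : V → V), X.Nonempty ∧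
      (∀ y ∈ G.coboundary ↑X, G.Adj y (f y) ∧ f y ∈ X) ∧
      Set.InjOn f (G.coboundary ↑X) ∧
      (G.coboundary ↑X).ncard ≤ 3 * k ∧
      (G.contractMatching X (G.coboundary ↑X) f).IsKConnected k := by
  obtain ⟨X, hX⟩ := G.exists_minimal_coboundaryAtMost (3 * k)
  obtain ⟨v, hv⟩ := hX.prop.1
  have hlarge : 3 * k < X.ncard := by
    have := G.ncard_neighborSet_lt hv
    have := hdeg v
    have := hX.prop.2
    omega
  obtain ⟨f, hf, hinj⟩ := G.exists_matching_of_minimal hX (by have := hX.prop.2; omega)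
  lift X to Finset V using X.toFinite
  rw [ncard_coe_finset] at hlarge
  exact ⟨X, f, by simpa using hX.prop.1, hf, hinj, hX.prop.2,
    G.contractMatching_isKConnected_of_minimal hX (by omega) (fun y hy => (hf y hy).2) hinj⟩

/-- If `G` is a non-empty graph with minimum degree `d ≥ 6k` (`k ≥ 1`), then there are a
non-empty set `X ⊆ V(G)` and a matching `M` (encoded by an injection `f` mapping each
vertex `y` of the coboundary `Y` of `X` to a neighbor `f y ∈ X`) from `Y` to `X`
saturating `Y`, such that `|Y| ≤ 3k` and `G[X ∪ Y]/M` is `k`-connected. -/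
theorem exists_highly_connected_contraction (k : ℕ) (hk : 1 ≤ k)
    (V : Type) [Fintype V] [Nonempty V] (G : SimpleGraph V) (d : ℕ) (hd : 6 * k ≤ d)
    (hdeg : ∀ v : V, d ≤ (G.neighborSet v).ncard) :
    ∃ (X : Finset V) (f : V → V), X.Nonempty ∧
      (∀ y ∈ G.coboundary ↑X, G.Adj y (f y) ∧ f y ∈ X) ∧
      Set.InjOn f (G.coboundary ↑X) ∧
      (G.coboundary ↑X).ncard ≤ 3 * k ∧
      (G.contractMatching X (G.coboundary ↑X) f).IsKConnected k :=
  exists_highly_connected_contraction_general k V G d hd hdeg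
end

section
/- Every graph G with no K_t minor has an independent set of size at least v(G)/(2(t − 1)). -/
/-!
The Duchet–Meyniel argument. In a nonempty vertex set `S`, take a connected set `D`, maximal
among connected sets more than half of whose vertices form an independent set `J`. Maximality
means that no edge leaves the closed neighbourhood `N` of `D` in `S`, so `S \ N` is handled by
induction on its own. Inductively, `N \ D` contains either a `K_{t-1}` model, to which `D` adds
the missing branch set since it dominates `N \ D`, or an independent set of size
`|N \ D| / (2(t-2))`; as `|D| < 2|J|`, the larger of this set and `J` has size at least
`|N| / (2(t-1))`.
-/

open Real

open Finset

namespace SimpleGraph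

variable {V : Type*} {G : SimpleGraph V}

variable (G) in
def IsCliqueModel {ι : Type*} (X : ι → Set V) : Prop :=
  (∀ i, (G.induce (X i)).Connected) ∧ (Pairwise fun i j => Disjoint (X i) (X j)) ∧
    Pairwise fun i j => ∃ u ∈ X i, ∃ v ∈ X j, G.Adj u v

theorem IsCliqueModel.hasMinor {ι : Type*} {X : ι → Set V} (hX : G.IsCliqueModel X) :
    G.HasMinor (⊤ : SimpleGraph ι) :=
  ⟨X, hX.1, hX.2.1, fun _ _ h => hX.2.2 h⟩

theorem isCliqueModel_of_subsingleton {ι : Type*} [Subsingleton ι] {D : Set V}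
    (hD : (G.induce D).Connected) : G.IsCliqueModel fun _ : ι => D :=
  ⟨fun _ => hD, Subsingleton.pairwise, Subsingleton.pairwise⟩

theorem IsCliqueModel.cons {n : ℕ} {X : Fin n → Set V} (hX : G.IsCliqueModel X) {D : Set V}
    (hD : (G.induce D).Connected) (hdisj : ∀ i, Disjoint D (X i))
    (hdom : ∀ i, ∀ x ∈ X i, ∃ d ∈ D, G.Adj d x) :
    G.IsCliqueModel (Fin.cons D X : Fin (n + 1) → Set V) := by
  have hadj i : ∃ d ∈ D, ∃ x ∈ X i, G.Adj d x := by
    obtain ⟨⟨x, hx⟩⟩ := (hX.1 i).nonempty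
    obtain ⟨d, hd, hdx⟩ := hdom i x hx
    exact ⟨d, hd, x, hx, hdx⟩
  refine ⟨Fin.cases hD hX.1, pairwise_fin_succ_iff.2 ?_, pairwise_fin_succ_iff.2 ?_⟩
  · simpa using ⟨fun i => (hdisj i).symm, hdisj, hX.2.1⟩
  · refine ⟨fun i => ?_, fun i => by simpa using hadj i, by simpa using hX.2.2⟩
    obtain ⟨d, hd, x, hx, hdx⟩ := hadj i
    simpa using ⟨x, hx, d, hd, hdx.symm⟩

variable (G) in
def IsHeavyConnected (D : Finset V) : Prop :=
  (G.induce (D : Set V)).Connected ∧ ∃ J ⊆ D, G.IsIndepSet (J : Set V) ∧ #D < 2 * #J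

theorem isHeavyConnected_singleton (v : V) : G.IsHeavyConnected {v} :=
  ⟨by rw [coe_singleton, induce_singleton_eq_top]; exact connected_top, {v}, subset_rfl,
    by simp, by simp⟩

theorem IsHeavyConnected.union_pair [DecidableEq V] {D : Finset V} (hD : G.IsHeavyConnected D)
    {y z : V}
    (hy : ∃ d ∈ D, d = y ∨ G.Adj d y) (hz : ∀ d ∈ D, d ≠ z ∧ ¬G.Adj d z) (hyz : G.Adj y z) :
    G.IsHeavyConnected (D ∪ {y, z}) := by
  obtain ⟨hconn, J, hJD, hJ, hcard⟩ := hD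
  have hzJ : z ∉ J := fun h => (hz z (hJD h)).1 rfl
  refine ⟨?_, insert z J, ?_, ?_, ?_⟩
  · rw [coe_union, coe_pair]
    obtain ⟨d, hd, rfl | hdy⟩ := hy
    · exact connected_induce_union hconn.preconnected
        (induce_pair_connected_of_adj hyz).preconnected hd (by simp) hyz
    · exact connected_induce_union hconn.preconnected
        (induce_pair_connected_of_adj hyz).preconnected hd (by simp) hdy
  · exact insert_subset (by simp) (hJD.trans subset_union_left)
  · rw [coe_insert, isIndepSet_iff, Set.pairwise_insert]
    exact ⟨hJ, fun b hb _ => ⟨fun h => (hz b (hJD hb)).2 h.symm, (hz b (hJD hb)).2⟩⟩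
  · calc #(D ∪ {y, z}) ≤ #D + 2 := (card_union_le _ _).trans (by grw [card_le_two])
      _ < 2 * #(insert z J) := by rw [card_insert_of_notMem hzJ]; omega

theorem exists_isHeavyConnected_forall_adj {S : Finset V} (hS : S.Nonempty) :
    ∃ D ⊆ S, G.IsHeavyConnected D ∧ ∀ y ∈ S, ∀ z ∈ S, G.Adj y z →
      (∃ d ∈ D, d = y ∨ G.Adj d y) → ∃ d ∈ D, d = z ∨ G.Adj d z := by
  classical
  obtain ⟨v, hv⟩ := hS
  obtain ⟨D, hD, hmax⟩ := (S.powerset.filter G.IsHeavyConnected).exists_max_image card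
    ⟨{v}, mem_filter.2 ⟨by simpa using hv, isHeavyConnected_singleton v⟩⟩
  rw [mem_filter, mem_powerset] at hD
  refine ⟨D, hD.1, hD.2, fun y hy z hz hyz hyD => ?_⟩
  by_contra! hzD
  have hle := hmax (D ∪ {y, z}) <| mem_filter.2
    ⟨mem_powerset.2 (union_subset hD.1 (by simp [insert_subset_iff, hy, hz])),
      hD.2.union_pair hyD hzD hyz⟩
  have hlt : #D < #(D ∪ {y, z}) :=
    card_lt_card (ssubset_of_subset_of_ne subset_union_left fun h =>
      (hzD z (h ▸ (by simp : z ∈ D ∪ {y, z}))).1 rfl)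
  omega

variable (G) in
def LargeIndepOrCliqueModel (s : ℕ) (S : Finset V) : Prop :=
  (∃ I ⊆ S, G.IsIndepSet (I : Set V) ∧ #S ≤ 2 * s * #I) ∨
    ∃ X : Fin (s + 1) → Set V, (∀ i, X i ⊆ S) ∧ G.IsCliqueModel X

theorem LargeIndepOrCliqueModel.of_empty (s : ℕ) : G.LargeIndepOrCliqueModel s ∅ :=
  Or.inl ⟨∅, subset_rfl, by simp, by simp⟩

theorem LargeIndepOrCliqueModel.union [DecidableEq V] {s : ℕ} {S N : Finset V} (hNS : N ⊆ S)
    (hsep : ∀ a ∈ S \ N, ∀ b ∈ N, ¬G.Adj a b) (hN : G.LargeIndepOrCliqueModel s N)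
    (hSN : G.LargeIndepOrCliqueModel s (S \ N)) : G.LargeIndepOrCliqueModel s S := by
  obtain ⟨I₁, hI₁, hI₁i, hcard₁⟩ | ⟨X, hXS, hX⟩ := hSN
  swap
  · exact Or.inr ⟨X, fun i => (hXS i).trans (by simp), hX⟩
  obtain ⟨I₂, hI₂, hI₂i, hcard₂⟩ | ⟨X, hXN, hX⟩ := hN
  swap
  · exact Or.inr ⟨X, fun i => (hXN i).trans (coe_subset.2 hNS), hX⟩
  refine Or.inl ⟨I₁ ∪ I₂, union_subset (hI₁.trans sdiff_subset) (hI₂.trans hNS), ?_, ?_⟩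
  · rw [coe_union, isIndepSet_iff, Set.pairwise_union]
    exact ⟨hI₁i, hI₂i, fun a ha b hb _ =>
      ⟨hsep a (hI₁ ha) b (hI₂ hb), fun h => hsep a (hI₁ ha) b (hI₂ hb) h.symm⟩⟩
  · have hdisj : Disjoint I₁ I₂ :=
      disjoint_of_subset_left hI₁ (disjoint_of_subset_right hI₂ sdiff_disjoint)
    rw [card_union_of_disjoint hdisj, ← card_sdiff_add_card_eq_card hNS]
    linarith

theorem LargeIndepOrCliqueModel.succ_of_dominating [DecidableEq V] {s : ℕ} {N D : Finset V}
    (hDN : D ⊆ N) (hD : G.IsHeavyConnected D) (hdom : ∀ x ∈ N \ D, ∃ d ∈ D, G.Adj d x)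
    (h : G.LargeIndepOrCliqueModel s (N \ D)) : G.LargeIndepOrCliqueModel (s + 1) N := by
  obtain ⟨hDconn, J, hJD, hJ, hDJ⟩ := hD
  obtain ⟨I, hI, hIi, hcard⟩ | ⟨X, hXN, hX⟩ := h
  · obtain ⟨K, hKN, hK, hJK, hIK⟩ : ∃ K ⊆ N, G.IsIndepSet (K : Set V) ∧ #J ≤ #K ∧ #I ≤ #K := by
      rcases le_total #J #I with hJI | hIJ
      · exact ⟨I, hI.trans sdiff_subset, hIi, hJI, le_rfl⟩
      · exact ⟨J, hJD.trans hDN, hJ, le_rfl, hIJ⟩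
    refine Or.inl ⟨K, hKN, hK, ?_⟩
    have := Nat.mul_le_mul_left (2 * s) hIK
    rw [← card_sdiff_add_card_eq_card hDN]
    nlinarith
  · have hXD i : Disjoint (D : Set V) (X i) :=
      Set.disjoint_of_subset_right (hXN i) (disjoint_coe.2 disjoint_sdiff)
    refine Or.inr ⟨Fin.cons (D : Set V) X, Fin.cases ?_ fun i => ?_,
      hX.cons hDconn hXD fun i x hx => hdom x (hXN i hx)⟩
    · simpa using hDN
    · simpa using (hXN i).trans (coe_subset.2 sdiff_subset)

theorem largeIndepOrCliqueModel (s : ℕ) (S : Finset V) : G.LargeIndepOrCliqueModel s S := by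
  classical
  induction S using Finset.strongInduction generalizing s with
  | H S ih =>
  obtain rfl | hS := S.eq_empty_or_nonempty
  · exact .of_empty s
  obtain ⟨D, hDS, hD, hclosed⟩ := G.exists_isHeavyConnected_forall_adj hS
  obtain ⟨⟨d, hd⟩⟩ := hD.1.nonempty
  cases s with
  | zero => exact Or.inr ⟨fun _ => D, fun _ => by simpa using hDS,
      isCliqueModel_of_subsingleton (ι := Fin 1) hD.1⟩
  | succ s =>
  set N := S.filter fun y => ∃ d ∈ D, d = y ∨ G.Adj d y
  have hDN : D ⊆ N := fun d hd => mem_filter.2 ⟨hDS hd, d, hd, Or.inl rfl⟩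
  have hNS : N ⊆ S := filter_subset _ _
  have hsep : ∀ a ∈ S \ N, ∀ b ∈ N, ¬G.Adj a b := by
    intro a ha b hb hab
    rw [mem_sdiff] at ha
    exact ha.2 (mem_filter.2 ⟨ha.1, hclosed b (hNS hb) a ha.1 hab.symm (mem_filter.1 hb).2⟩)
  have hdom : ∀ x ∈ N \ D, ∃ d ∈ D, G.Adj d x := by
    intro x hx
    obtain ⟨hxN, hxD⟩ := mem_sdiff.1 hx
    obtain ⟨d, hd, rfl | hdx⟩ := (mem_filter.1 hxN).2
    exacts [absurd hd hxD, ⟨d, hd, hdx⟩]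
  refine .union hNS hsep (.succ_of_dominating hDN hD hdom (ih _ ?_ s)) (ih _ ?_ (s + 1))
  · exact (sdiff_ssubset hDN ⟨d, hd⟩).trans_subset hNS
  · exact sdiff_ssubset hNS ⟨d, hDN hd⟩

end SimpleGraph

/-- Every graph `G` with no `K_t` minor has an independent set of size at least
`v(G)/(2(t-1))`. -/
theorem independent_set_of_Kt_minor_free (t : ℕ)
    (V : Type) [Fintype V] (G : SimpleGraph V)
    (h : ¬ G.HasMinor (⊤ : SimpleGraph (Fin t))) :
    ∃ I : Set V, I.Pairwise (fun u v => ¬ G.Adj u v) ∧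
      (Fintype.card V : ℝ) / (2 * ((t : ℝ) - 1)) ≤ (I.ncard : ℝ) := by
  cases t with
  | zero => exact ⟨∅, Set.pairwise_empty _, by norm_num [div_nonpos_iff]⟩
  | succ s =>
  obtain ⟨I, -, hI, hcard⟩ | ⟨X, -, hX⟩ := G.largeIndepOrCliqueModel s Finset.univ
  · refine ⟨I, hI, ?_⟩
    rw [Set.ncard_coe_finset, Nat.cast_succ, add_sub_cancel_right]
    refine div_le_of_le_mul₀ (by positivity) (by positivity) ?_
    rw [card_univ] at hcard
    exact_mod_cast hcard.trans_eq (mul_comm _ _)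
  · exact absurd hX.hasMinor h
end

section
/- There exists a constant C > 0 such that for all integers m ≥ 2 and r ≥ 1, the list chromatic number of the complete r-partite graph K_{m∗r} with m vertices in every part satisfies χ_ℓ(K_{m∗r}) ≤ C·r·log m. -/
open Real

/-- The complete `r`-partite graph with `m` vertices in each part: vertices are pairs in
`Fin r × Fin m`, and two vertices are adjacent iff they lie in different parts. -/
def completeMultipartite (r m : ℕ) : SimpleGraph (Fin r × Fin m) :=
  SimpleGraph.comap Prod.fst ⊤


/-!
Label every color independently and uniformly by a pair `(i, b) ∈ Fin r × Bool`. A vertex of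
part `i` is *matched* if its list contains a color labelled `(i, false)`; matched vertices take such
a color, and they never clash because vertices of different parts then use colors with different
labels. Colors labelled `(_, true)` are reserved for the unmatched vertices: if there are at most
`t` of them and every list contains at least `t` reserved colors, Hall's theorem gives them
distinct reserved colors. For lists of size `8t` with `t = r ⌈log m⌉`, a first-moment count
(Markov's inequality for the number of unmatched vertices, a union bound over vertices and
`7t`-subsets of their lists for the reserved colors) shows that such a labelling exists.
-/

open Finset

section Counting

variable {α β : Type*} [Fintype α] [DecidableEq α] [Fintype β] [DecidableEq β]

theorem card_filter_forall_mem_mul_pow (W : Finset α) (E : Finset β) :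
    #{f : α → β | ∀ a ∈ W, f a ∈ E} * Fintype.card β ^ #W =
      #E ^ #W * Fintype.card β ^ Fintype.card α := by
  have hpi : ({f : α → β | ∀ a ∈ W, f a ∈ E} : Finset _) =
      Fintype.piFinset fun a => if a ∈ W then E else univ := by
    ext f
    simp only [mem_filter, mem_univ, true_and, Fintype.mem_piFinset]
    exact forall_congr' fun a => by split_ifs with ha <;> simp [ha]
  rw [hpi, Fintype.card_piFinset]
  simp only [apply_ite card]
  rw [prod_ite, filter_mem_eq_inter, univ_inter, prod_const, prod_const, filter_not,
    filter_mem_eq_inter, univ_inter, ← compl_eq_univ_sdiff, card_compl, card_univ, mul_assoc,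
    ← pow_add, Nat.sub_add_cancel (card_le_univ W)]

theorem card_filter_card_filter_notMem_lt_mul_pow_le (S : Finset α) (E : Finset β) {s t : ℕ}
    (hst : s + t = #S) :
    #{f : α → β | #{a ∈ S | f a ∉ E} < t} * Fintype.card β ^ s ≤
      (#S).choose t * #E ^ s * Fintype.card β ^ Fintype.card α := by
  have hcover : ({f : α → β | #{a ∈ S | f a ∉ E} < t} : Finset _) ⊆
      (S.powersetCard s).biUnion fun W => {f | ∀ a ∈ W, f a ∈ E} := by
    intro f hf
    have hin : s ≤ #{a ∈ S | f a ∈ E} := by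
      have := card_filter_add_card_filter_not (s := S) (fun a => f a ∈ E)
      simp only [mem_filter, mem_univ, true_and] at hf
      omega
    obtain ⟨W, hWS, hW⟩ := exists_subset_card_eq hin
    simp only [mem_biUnion, mem_powersetCard, mem_filter, mem_univ, true_and]
    exact ⟨W, ⟨hWS.trans (filter_subset _ _), hW⟩, fun a ha => (mem_filter.1 (hWS ha)).2⟩
  calc _ ≤ (∑ W ∈ S.powersetCard s, #{f : α → β | ∀ a ∈ W, f a ∈ E}) * Fintype.card β ^ s :=
        Nat.mul_le_mul_right _ ((card_le_card hcover).trans card_biUnion_le)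
    _ = ∑ W ∈ S.powersetCard s, #E ^ s * Fintype.card β ^ Fintype.card α := by
        rw [sum_mul]
        refine sum_congr rfl fun W hW => ?_
        rw [← (mem_powersetCard.1 hW).2, card_filter_forall_mem_mul_pow]
    _ = (#S).choose t * #E ^ s * Fintype.card β ^ Fintype.card α := by
        rw [sum_const, card_powersetCard, ← hst, Nat.choose_symm_add, smul_eq_mul, mul_assoc]

end Counting

theorem card_filter_lt_card_filter_mul_le_sum {Ω V : Type*} [Fintype Ω] [Fintype V]
    (P : Ω → V → Prop) [∀ f v, Decidable (P f v)] (t : ℕ) :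
    #{f | t < #{v | P f v}} * (t + 1) ≤ ∑ v, #{f | P f v} :=
  calc #{f | t < #{v | P f v}} * (t + 1) ≤ ∑ f ∈ {f | t < #{v | P f v}}, #{v | P f v} := by
        rw [← smul_eq_mul]
        exact card_nsmul_le_sum _ _ _ fun f hf => (mem_filter.1 hf).2
    _ ≤ ∑ f, #{v | P f v} := sum_le_sum_of_subset (filter_subset _ _)
    _ = ∑ v, #{f | P f v} := by simp only [card_filter]; exact sum_comm

theorem exists_injective_forall_mem_of_card_le {ι κ : Type*} [Fintype ι] [DecidableEq κ]
    (S : ι → Finset κ) (h : ∀ i, Fintype.card ι ≤ #(S i)) :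
    ∃ g : ι → κ, Function.Injective g ∧ ∀ i, g i ∈ S i := by
  refine (all_card_le_biUnion_card_iff_exists_injective S).1 fun s => ?_
  obtain rfl | ⟨i, hi⟩ := s.eq_empty_or_nonempty
  · simp
  · exact (card_le_univ s).trans ((h i).trans (card_le_card (subset_biUnion_of_mem S hi)))

namespace SimpleGraph

variable {V : Type*} (G : SimpleGraph V)

theorem listColorable_of_forall_card_eq [Fintype V] (k : ℕ)
    (h : ∀ (κ : Type) [Fintype κ] [DecidableEq κ] (S : V → Finset κ), (∀ v, #(S v) = k) →
      ∃ c : V → κ, (∀ v, c v ∈ S v) ∧ ∀ ⦃u v⦄, G.Adj u v → c u ≠ c v) :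
    G.ListColorable k := by
  intro L hL
  choose L' hL'L hL' using fun v => exists_subset_card_eq (hL v)
  let A := univ.biUnion L'
  have hL'A : ∀ v, L' v ⊆ A := fun v => subset_biUnion_of_mem L' (mem_univ v)
  obtain ⟨c, hcS, hc⟩ := h A (fun v => (L' v).subtype (· ∈ A)) fun v => by
    rw [card_subtype, filter_true_of_mem (hL'A v), hL']
  exact ⟨fun v => c v, fun v => hL'L v (mem_subtype.1 (hcS v)),
    fun u v huv hcuv => hc huv (Subtype.ext hcuv)⟩

theorem exists_proper_choice_of_reserved {κ : Type*} [DecidableEq κ] (L : V → Finset κ)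
    (T : κ → Prop) [DecidablePred T] (B : Finset V) (c₀ : {v // v ∉ B} → κ)
    (hc₀ : ∀ v : {v // v ∉ B}, c₀ v ∈ L v ∧ ¬T (c₀ v))
    (hc₀G : ∀ u v : {v // v ∉ B}, G.Adj u v → c₀ u ≠ c₀ v)
    (hB : ∀ v ∈ B, #B ≤ #{a ∈ L v | T a}) :
    ∃ c : V → κ, (∀ v, c v ∈ L v) ∧ ∀ ⦃u v⦄, G.Adj u v → c u ≠ c v := by
  classical
  obtain ⟨g, hg, hgL⟩ := exists_injective_forall_mem_of_card_le
    (fun v : B => {a ∈ L v | T a}) fun v => by simpa using hB v v.2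
  refine ⟨fun v => if hv : v ∈ B then g ⟨v, hv⟩ else c₀ ⟨v, hv⟩, fun v => ?_, fun u v huv => ?_⟩
  · by_cases hv : v ∈ B
    · simpa [hv] using (mem_filter.1 (hgL ⟨v, hv⟩)).1
    · simpa [hv] using (hc₀ ⟨v, hv⟩).1
  · by_cases hu : u ∈ B <;> by_cases hv : v ∈ B <;> simp only [hu, hv, dite_true, dite_false]
    · exact hg.ne fun h => huv.ne (congrArg Subtype.val h)
    · exact fun h => (hc₀ ⟨v, hv⟩).2 (h ▸ (mem_filter.1 (hgL ⟨u, hu⟩)).2)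
    · exact fun h => (hc₀ ⟨u, hu⟩).2 (h ▸ (mem_filter.1 (hgL ⟨v, hv⟩)).2)
    · exact hc₀G ⟨u, hu⟩ ⟨v, hv⟩ huv

end SimpleGraph

theorem completeMultipartite_exists_proper_choice {r m t : ℕ} {κ : Type*} [DecidableEq κ]
    (S : Fin r × Fin m → Finset κ) (f : κ → Fin r × Bool)
    (hbad : #{v | (v.1, false) ∉ (S v).image f} ≤ t) (hres : ∀ v, t ≤ #{a ∈ S v | (f a).2}) :
    ∃ c : Fin r × Fin m → κ, (∀ v, c v ∈ S v) ∧
      ∀ ⦃u v⦄, (completeMultipartite r m).Adj u v → c u ≠ c v := by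
  set B : Finset (Fin r × Fin m) := {v | (v.1, false) ∉ (S v).image f}
  have hmatched (v : {v // v ∉ B}) : ∃ a, a ∈ S v ∧ f a = (v.1.1, false) := by
    simpa [B] using v.2
  choose c₀ hc₀S hc₀f using hmatched
  refine (completeMultipartite r m).exists_proper_choice_of_reserved S (fun a => (f a).2) B c₀
    (fun v => ⟨hc₀S v, by simp [hc₀f v]⟩) (fun u v huv h => ?_)
    fun v _ => hbad.trans (hres v)
  have := hc₀f u
  rw [h, hc₀f v] at this
  exact huv (congrArg Prod.fst this).symm

section Labelling

variable {κ : Type*} [Fintype κ] [DecidableEq κ] {r m s t : ℕ} (S : Fin r × Fin m → Finset κ)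

theorem two_mul_card_filter_many_unmatched_lt (hr : 0 < r) {k : ℕ} (hS : ∀ v, #(S v) = k)
    (h : 2 * (r * m) * (2 * r - 1) ^ k < (t + 1) * (2 * r) ^ k) :
    2 * #{f : κ → Fin r × Bool | t < #{v | (v.1, false) ∉ (S v).image f}} <
      (2 * r) ^ Fintype.card κ := by
  set n := Fintype.card κ
  have hv (v : Fin r × Fin m) : #{f : κ → Fin r × Bool | (v.1, false) ∉ (S v).image f} *
      (2 * r) ^ k = (2 * r - 1) ^ k * (2 * r) ^ n := by
    simpa [hS v, card_compl, mul_comm] using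
      card_filter_forall_mem_mul_pow (S v) ({(v.1, false)}ᶜ : Finset (Fin r × Bool))
  have hsum : #{f : κ → Fin r × Bool | t < #{v | (v.1, false) ∉ (S v).image f}} * (t + 1) *
      (2 * r) ^ k ≤ r * m * ((2 * r - 1) ^ k * (2 * r) ^ n) :=
    calc _ ≤ (∑ v, #{f : κ → Fin r × Bool | (v.1, false) ∉ (S v).image f}) * (2 * r) ^ k :=
          Nat.mul_le_mul_right _ (card_filter_lt_card_filter_mul_le_sum _ t)
      _ = _ := by simp only [sum_mul, hv, sum_const, card_univ, Fintype.card_prod,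
            Fintype.card_fin, smul_eq_mul]
  refine Nat.lt_of_mul_lt_mul_right (a := (t + 1) * (2 * r) ^ k) ?_
  calc _ ≤ 2 * (r * m * ((2 * r - 1) ^ k * (2 * r) ^ n)) := by
        rw [mul_assoc 2, ← mul_assoc _ (t + 1)]
        exact Nat.mul_le_mul_left 2 hsum
    _ = 2 * (r * m) * (2 * r - 1) ^ k * (2 * r) ^ n := by ring
    _ < (t + 1) * (2 * r) ^ k * (2 * r) ^ n := Nat.mul_lt_mul_of_pos_right h (by positivity)
    _ = _ := mul_comm _ _

theorem two_mul_card_filter_exists_few_reserved_lt (hr : 0 < r) (hS : ∀ v, #(S v) = s + t)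
    (h : 2 * (r * m) * (s + t).choose t < 2 ^ s) :
    2 * #{f : κ → Fin r × Bool | ∃ v, #{a ∈ S v | (f a).2} < t} < (2 * r) ^ Fintype.card κ := by
  set n := Fintype.card κ
  have hv (v : Fin r × Fin m) : #{f : κ → Fin r × Bool | #{a ∈ S v | (f a).2} < t} *
      (2 * r) ^ s ≤ (s + t).choose t * r ^ s * (2 * r) ^ n := by
    have hmem (x : Fin r × Bool) : x ∉ (univ ×ˢ {false} : Finset _) ↔ x.2 = true := by
      rcases x with ⟨i, _ | _⟩ <;> simp
    have := card_filter_card_filter_notMem_lt_mul_pow_le (α := κ) (S v)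
      (univ ×ˢ {false} : Finset (Fin r × Bool)) (hS v).symm
    simp only [hmem] at this
    rwa [hS v, card_product, card_singleton, card_univ, Fintype.card_fin, mul_one,
      Fintype.card_prod, Fintype.card_fin, Fintype.card_bool, mul_comm r 2] at this
  have hunion : ({f : κ → Fin r × Bool | ∃ v, #{a ∈ S v | (f a).2} < t} : Finset _) =
      univ.biUnion fun v => {f | #{a ∈ S v | (f a).2} < t} := by
    ext f
    simp
  have hsum : #{f : κ → Fin r × Bool | ∃ v, #{a ∈ S v | (f a).2} < t} * (2 * r) ^ s ≤
      r * m * ((s + t).choose t * r ^ s * (2 * r) ^ n) :=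
    calc _ ≤ (∑ v, #{f : κ → Fin r × Bool | #{a ∈ S v | (f a).2} < t}) * (2 * r) ^ s :=
          Nat.mul_le_mul_right _ (hunion ▸ card_biUnion_le)
      _ ≤ ∑ _v : Fin r × Fin m, (s + t).choose t * r ^ s * (2 * r) ^ n := by
          rw [sum_mul]
          exact sum_le_sum fun v _ => hv v
      _ = _ := by simp only [sum_const, card_univ, Fintype.card_prod, Fintype.card_fin,
            smul_eq_mul]
  refine Nat.lt_of_mul_lt_mul_right (a := (2 * r) ^ s) ?_
  calc _ ≤ 2 * (r * m * ((s + t).choose t * r ^ s * (2 * r) ^ n)) := by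
        rw [mul_assoc]
        exact Nat.mul_le_mul_left 2 hsum
    _ = 2 * (r * m) * (s + t).choose t * (r ^ s * (2 * r) ^ n) := by ring
    _ < 2 ^ s * (r ^ s * (2 * r) ^ n) := Nat.mul_lt_mul_of_pos_right h (by positivity)
    _ = _ := by ring

theorem exists_labelling (hr : 0 < r) (hS : ∀ v, #(S v) = s + t)
    (h₁ : 2 * (r * m) * (2 * r - 1) ^ (s + t) < (t + 1) * (2 * r) ^ (s + t))
    (h₂ : 2 * (r * m) * (s + t).choose t < 2 ^ s) :
    ∃ f : κ → Fin r × Bool,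
      #{v | (v.1, false) ∉ (S v).image f} ≤ t ∧ ∀ v, t ≤ #{a ∈ S v | (f a).2} := by
  have hX := two_mul_card_filter_many_unmatched_lt S hr hS h₁
  have hY := two_mul_card_filter_exists_few_reserved_lt S hr hS h₂
  obtain ⟨f, -, hf⟩ := exists_mem_notMem_of_card_lt_card
    (s := ({f : κ → Fin r × Bool | t < #{v | (v.1, false) ∉ (S v).image f}} : Finset _) ∪
      ({f : κ → Fin r × Bool | ∃ v, #{a ∈ S v | (f a).2} < t} : Finset _)) (t := univ) <| by
    rw [card_univ, Fintype.card_fun, Fintype.card_prod, Fintype.card_fin, Fintype.card_bool,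
      mul_comm]
    exact (card_union_le _ _).trans_lt (by omega)
  simp only [mem_union, mem_filter, mem_univ, true_and, not_or, not_lt, not_exists] at hf
  exact ⟨f, hf⟩

end Labelling

theorem two_mul_mul_two_mul_sub_one_pow_lt {r m ℓ : ℕ} (hr : 0 < r) (hℓ : 0 < ℓ)
    (hm : (m : ℝ) ≤ exp ℓ) :
    2 * (r * m) * (2 * r - 1) ^ (8 * (r * ℓ)) < (r * ℓ + 1) * (2 * r) ^ (8 * (r * ℓ)) := by
  have hr' : (1 : ℝ) ≤ r := by exact_mod_cast hr
  have hℓ' : (1 : ℝ) ≤ ℓ := by exact_mod_cast hℓ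
  have hq : ((2 * r - 1 : ℝ) / (2 * r)) = 1 - 1 / ((2 * r : ℕ) : ℝ) := by
    push_cast; field_simp
  have hq0 : 0 ≤ (2 * r - 1 : ℝ) / (2 * r) := div_nonneg (by linarith) (by linarith)
  have hdecay : ((2 * r - 1 : ℝ) / (2 * r)) ^ (8 * (r * ℓ)) ≤ exp (-(4 * ℓ)) :=
    calc _ = (((2 * r - 1 : ℝ) / (2 * r)) ^ (2 * r)) ^ (4 * ℓ) := by rw [← pow_mul]; ring_nf
      _ ≤ exp (-1) ^ (4 * ℓ) := by
          gcongr
          rw [hq]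
          exact one_sub_div_pow_le_exp_neg (by push_cast; linarith)
      _ = exp (-(4 * ℓ)) := by rw [← exp_nat_mul]; push_cast; ring_nf
  have hexp : exp ℓ * exp (-(4 * ℓ)) = exp (-(3 * ℓ)) := by rw [← exp_add]; ring_nf
  have hsmall : 2 * exp (-(3 * ℓ)) < 1 := by
    rw [exp_neg, ← div_eq_mul_inv, div_lt_one (exp_pos _)]
    linarith [add_one_le_exp (3 * ℓ : ℝ)]
  rw [← Nat.cast_lt (α := ℝ)]
  push_cast [Nat.cast_sub (by omega : 1 ≤ 2 * r)]
  calc 2 * (r * m) * (2 * r - 1 : ℝ) ^ (8 * (r * ℓ))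
      = 2 * r * m * ((2 * r - 1) / (2 * r)) ^ (8 * (r * ℓ)) * (2 * r) ^ (8 * (r * ℓ)) := by
        rw [div_pow]; field_simp
    _ ≤ 2 * r * exp ℓ * exp (-(4 * ℓ)) * (2 * r) ^ (8 * (r * ℓ)) := by gcongr
    _ = r * (2 * exp (-(3 * ℓ))) * (2 * r) ^ (8 * (r * ℓ)) := by
        rw [mul_assoc (2 * r : ℝ), hexp]; ring
    _ < r * 1 * (2 * r) ^ (8 * (r * ℓ)) := by gcongr
    _ ≤ (r * ℓ + 1) * (2 * r) ^ (8 * (r * ℓ)) := by gcongr; nlinarith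

theorem two_mul_mul_choose_lt {r m ℓ : ℕ} (hr : 0 < r) (hℓ : 0 < ℓ) (hm : (m : ℝ) ≤ exp ℓ) :
    2 * (r * m) * (8 * (r * ℓ)).choose (r * ℓ) < 2 ^ (7 * (r * ℓ)) := by
  have hrt : r ≤ r * ℓ := Nat.le_mul_of_pos_right r hℓ
  set t := r * ℓ
  have ht : 0 < t := Nat.mul_pos hr hℓ
  have hmt : (m : ℝ) ≤ exp t :=
    hm.trans (exp_le_exp.2 (by exact_mod_cast Nat.le_mul_of_pos_left ℓ hr))
  clear_value t
  have hchoose : ((8 * t).choose t : ℝ) ≤ 8 ^ t * exp t :=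
    calc _ ≤ ((8 * t : ℕ) : ℝ) ^ t / t.factorial := Nat.choose_le_pow_div t (8 * t)
      _ = 8 ^ t * (t ^ t / t.factorial) := by push_cast; rw [mul_pow]; ring
      _ ≤ 8 ^ t * exp t := by gcongr; exact pow_div_factorial_le_exp _ (by positivity) t
  have h2r : 2 * r ≤ 2 ^ t := by
    obtain ⟨j, rfl⟩ : ∃ j, r = j + 1 := ⟨r - 1, by omega⟩
    calc 2 * (j + 1) ≤ 2 ^ (j + 1) := by
          rw [pow_succ]; have := Nat.lt_two_pow_self (n := j); omega
      _ ≤ 2 ^ t := Nat.pow_le_pow_right two_pos hrt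
  have het : exp (t : ℝ) = exp 1 ^ t := by rw [← exp_nat_mul, mul_one]
  have he : exp 1 ^ 2 < 8 := by nlinarith [exp_one_lt_d9, exp_pos 1]
  rw [← Nat.cast_lt (α := ℝ)]
  calc ((2 * (r * m) * (8 * t).choose t : ℕ) : ℝ)
      = ((2 * r : ℕ) : ℝ) * m * (8 * t).choose t := by push_cast; ring
    _ ≤ 2 ^ t * exp t * (8 ^ t * exp t) := by gcongr; exact_mod_cast h2r
    _ = (2 * 8 * exp 1 ^ 2) ^ t := by rw [het, mul_pow, mul_pow, ← pow_mul]; ring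
    _ < (2 * 8 * 8) ^ t := by gcongr
    _ = ((2 ^ (7 * t) : ℕ) : ℝ) := by rw [pow_mul]; norm_num

theorem completeMultipartite_listColorable {r m ℓ : ℕ} (hr : 0 < r) (hℓ : 0 < ℓ)
    (hm : (m : ℝ) ≤ exp ℓ) : (completeMultipartite r m).ListColorable (8 * (r * ℓ)) := by
  have h₁ := two_mul_mul_two_mul_sub_one_pow_lt hr hℓ hm
  have h₂ := two_mul_mul_choose_lt hr hℓ hm
  rw [show 8 * (r * ℓ) = 7 * (r * ℓ) + r * ℓ by ring] at h₁ h₂ ⊢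
  refine SimpleGraph.listColorable_of_forall_card_eq _ _ fun κ _ _ S hS => ?_
  obtain ⟨f, hbad, hres⟩ := exists_labelling S hr hS h₁ h₂
  exact completeMultipartite_exists_proper_choice S f hbad hres

/-- There is a constant `C > 0` such that for all `m ≥ 2` and `r ≥ 1`, the list
chromatic number of the complete `r`-partite graph with parts of size `m` is at most
`C·r·log m`. -/
theorem list_chromatic_number_completeMultipartite :
    ∃ C : ℝ, 0 < C ∧ ∀ m r : ℕ, 2 ≤ m → 1 ≤ r →
      ((completeMultipartite r m).listChromaticNumber : ℝ) ≤ C * r * Real.log m := by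
  refine ⟨24, by norm_num, fun m r hm hr => ?_⟩
  have hlog : 1 / 2 < log m :=
    lt_of_lt_of_le (by linarith [log_two_gt_d9]) (log_le_log two_pos (by exact_mod_cast hm))
  set ℓ := ⌈log m⌉₊
  have hℓ : 0 < ℓ := Nat.lt_ceil.2 (by simp only [CharP.cast_eq_zero]; linarith)
  have hmℓ : (m : ℝ) ≤ exp ℓ := by
    rw [← exp_log (by positivity : (0 : ℝ) < m)]
    exact exp_le_exp.2 (Nat.le_ceil _)
  have hχ : (completeMultipartite r m).listChromaticNumber ≤ 8 * (r * ℓ) :=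
    Nat.sInf_le (completeMultipartite_listColorable hr hℓ hmℓ)
  have hℓlog : (ℓ : ℝ) < log m + 1 := Nat.ceil_lt_add_one (by linarith)
  calc ((completeMultipartite r m).listChromaticNumber : ℝ) ≤ 8 * (r * ℓ) := by exact_mod_cast hχ
    _ ≤ 8 * (r * (3 * log m)) := by gcongr; linarith
    _ = 24 * r * log m := by ring
end
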